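/- arXiv:1803.01083 — 5 statements merged into one kernel-verified Lean document; each statement's English description precedes it below -/
import Mathlib

section
/- Let p ∈ 𝒜 be an idempotent. Let a, b, c ∈ 𝒜 satisfy a = p a p, b = (1−p) b (1−p), c = (1−p) c p, and set x = a + c + b (the block lower-triangular element [[a,0],[c,b]] relative to p). Assume a has a generalized Drazin inverse a^d with a^d = p a^d p, and b has a generalized Drazin inverse b^d with b^d = (1−p) b^d (1−p). Set a^π = p − a a^d and b^π = (1−p) − b b^d. Then x is generalized Drazin invertible and x^d = a^d + u + b^d, where u = Σ_{n=0}^∞ (b^d)^{n+2} c a^n a^π + Σ_{n=0}^∞ b^π b^n c (a^d)^{n+2} − b^d c a^d. -/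
open Filter Topology ENNReal

variable {𝒜 : Type*} [NormedRing 𝒜] [NormedAlgebra ℂ 𝒜] [CompleteSpace 𝒜]

/-- An element of a complex unital Banach algebra is quasinilpotent if its
spectral radius is `0`. -/
def IsQuasinilpotent (q : 𝒜) : Prop := spectralRadius ℂ q = 0

/-- `xd` is a generalized Drazin inverse of `x`. -/
def IsGDrazinInverse (x xd : 𝒜) : Prop :=
  xd * x * xd = xd ∧ x * xd = xd * x ∧ IsQuasinilpotent (x - x ^ 2 * xd)

/-- `x` is generalized Drazin invertible. -/
def IsGDrazinInvertible (x : 𝒜) : Prop := ∃ xd, IsGDrazinInverse x xd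

lemma IsQuasinilpotent.isUnit_smul_sub {q : 𝒜} (h : IsQuasinilpotent q)
    {l : ℂ} (hl : l ≠ 0) : IsUnit (algebraMap ℂ 𝒜 l - q) := by
  by_contra hu
  have hmem : l ∈ spectrum ℂ q := spectrum.mem_iff.mpr hu
  have : (‖l‖₊ : ℝ≥0∞) ≤ spectralRadius ℂ q :=
    le_iSup₂ (f := fun k (_ : k ∈ spectrum ℂ q) => (‖k‖₊ : ℝ≥0∞)) l hmem
  rw [h, le_zero_iff] at this
  simp only [ENNReal.coe_eq_zero, nnnorm_eq_zero] at this
  exact hl this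

lemma isQuasinilpotent_of_isUnit {q : 𝒜}
    (h : ∀ l : ℂ, l ≠ 0 → IsUnit (algebraMap ℂ 𝒜 l - q)) : IsQuasinilpotent q := by
  rw [IsQuasinilpotent, spectralRadius, ← le_zero_iff]
  refine iSup₂_le fun l hl => ?_
  rcases eq_or_ne l 0 with rfl | hl0
  · simp
  · exact absurd (h l hl0) (spectrum.mem_iff.mp hl)

/-- quasinilpotence of a block triangular element with quasinilpotent diagonal blocks -/
lemma quasinilpotent_triangular {p qa w qb : 𝒜} (hp : IsIdempotentElem p)
    (h1 : qa * p = qa) (h2 : p * qa = qa) (h3 : qb * p = 0) (h4 : p * qb = 0)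
    (h5 : w * p = w) (h6 : p * w = 0)
    (Ha : IsQuasinilpotent qa) (Hb : IsQuasinilpotent qb) :
    IsQuasinilpotent (qa + w + qb) := by
  apply isQuasinilpotent_of_isUnit
  intro l hl
  set L := algebraMap ℂ 𝒜 l with hLdef
  set M := algebraMap ℂ 𝒜 l⁻¹ with hMdef
  have hML : M * L = 1 := by rw [hLdef, hMdef, ← map_mul, inv_mul_cancel₀ hl, map_one]
  have hLM : L * M = 1 := by rw [hLdef, hMdef, ← map_mul, mul_inv_cancel₀ hl, map_one]
  have hLc : ∀ z : 𝒜, L * z = z * L := fun z => (Algebra.commutes l z)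
  have hMc : ∀ z : 𝒜, M * z = z * M := fun z => (Algebra.commutes l⁻¹ z)
  obtain ⟨u, hu⟩ := Ha.isUnit_smul_sub hl
  obtain ⟨v, hv⟩ := Hb.isUnit_smul_sub hl
  set s : 𝒜 := ↑u⁻¹ with hsdef
  set t : 𝒜 := ↑v⁻¹ with htdef
  have hDs : (L - qa) * s = 1 := by rw [hsdef, ← hu]; exact u.mul_inv
  have hsD : s * (L - qa) = 1 := by rw [hsdef, ← hu]; exact u.inv_mul
  have hEt : (L - qb) * t = 1 := by rw [htdef, ← hv]; exact v.mul_inv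
  have htE : t * (L - qb) = 1 := by rw [htdef, ← hv]; exact v.inv_mul
  -- commutation of p with everything relevant
  have hpD : p * (L - qa) = (L - qa) * p := by
    rw [mul_sub, sub_mul, h2, ← h1, hLc p]; nth_rewrite 2 [h1]; rfl
  have hpE : p * (L - qb) = (L - qb) * p := by
    rw [mul_sub, sub_mul, h4, h3, hLc p]
  have hps : p * s = s * p := by
    calc p * s = (s * (L - qa)) * (p * s) := by rw [hsD, one_mul]
    _ = s * ((L - qa) * p) * s := by rw [mul_assoc, mul_assoc, mul_assoc]
    _ = s * (p * (L - qa)) * s := by rw [hpD]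
    _ = (s * p) * ((L - qa) * s) := by rw [mul_assoc, mul_assoc, mul_assoc]
    _ = s * p := by rw [hDs, mul_one]
  have hpt : p * t = t * p := by
    calc p * t = (t * (L - qb)) * (p * t) := by rw [htE, one_mul]
    _ = t * ((L - qb) * p) * t := by rw [mul_assoc, mul_assoc, mul_assoc]
    _ = t * (p * (L - qb)) * t := by rw [hpE]
    _ = (t * p) * ((L - qb) * t) := by rw [mul_assoc, mul_assoc, mul_assoc]
    _ = t * p := by rw [hEt, mul_one]
  -- M facts
  have hwqb : w * qb = 0 := by
    have : (w * p) * qb = 0 := by rw [mul_assoc, h4, mul_zero]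
    rwa [h5] at this
  have hww : w * w = 0 := by
    have : (w * p) * w = 0 := by rw [mul_assoc, h6, mul_zero]
    rwa [h5] at this
  have hqaw : qa * w = 0 := by
    have : (qa * p) * w = 0 := by rw [mul_assoc, h6, mul_zero]
    rwa [h1] at this
  have hwt : w * t = M * w := by
    have e1 : w * (L - qb) = L * w := by rw [mul_sub, hwqb, sub_zero, hLc]
    have e2 : w * ((L - qb) * t) = w := by rw [hEt, mul_one]
    rw [← mul_assoc, e1, mul_assoc] at e2
    calc w * t = (M * L) * (w * t) := by rw [hML, one_mul]
    _ = M * (L * (w * t)) := by rw [mul_assoc]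
    _ = M * w := by rw [e2]
  have hsw : s * w = M * w := by
    have e1 : (L - qa) * w = L * w := by rw [sub_mul, hqaw, sub_zero]
    have e2 : (s * (L - qa)) * w = w := by rw [hsD, one_mul]
    rw [mul_assoc, e1, ← mul_assoc, ← hLc, mul_assoc] at e2
    calc s * w = (M * L) * (s * w) := by rw [hML, one_mul]
    _ = M * (L * (s * w)) := by rw [mul_assoc]
    _ = M * w := by rw [e2]
  -- helper projection facts
  have hpP : p * (1 - p) = 0 := by rw [mul_sub, mul_one, hp.eq, sub_self]
  have hPp : (1 - p) * p = 0 := by rw [sub_mul, one_mul, hp.eq, sub_self]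
  have hPw : (1 - p) * w = w := by rw [sub_mul, one_mul, h6, sub_zero]
  have hwP : w * (1 - p) = 0 := by rw [mul_sub, mul_one, h5, sub_self]
  have hPs : (1 - p) * s = s * (1 - p) := by
    rw [one_sub_mul, mul_one_sub, hps]
  have hPt : (1 - p) * t = t * (1 - p) := by
    rw [one_sub_mul, mul_one_sub, hpt]
  have hPD : (1 - p) * (L - qa) = (L - qa) * (1 - p) := by
    rw [one_sub_mul, mul_one_sub, hpD]
  have hPE : (1 - p) * (L - qb) = (L - qb) * (1 - p) := by
    rw [one_sub_mul, mul_one_sub, hpE]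
  have hqbP : qb * (1 - p) = qb := by rw [mul_sub, mul_one, h3, sub_zero]
  have hBform : L * (1 - p) - qb = (L - qb) * (1 - p) := by rw [sub_mul, hqbP]
  have hAform : L * p - qa = (L - qa) * p := by rw [sub_mul, h1]
  -- the decomposition of L - (qa + w + qb)
  have hdec : L - (qa + w + qb) = (L - qa) * p + (L - qb) * (1 - p) - w := by
    rw [← hAform, ← hBform]
    have hL : L * p + L * (1 - p) = L := by
      rw [← mul_add, add_sub_cancel, mul_one]
    calc L - (qa + w + qb) = (L * p + L * (1 - p)) - (qa + w + qb) := by rw [hL]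
    _ = L * p - qa + (L * (1 - p) - qb) - w := by abel
  set P : 𝒜 := 1 - p with hPdef
  set D : 𝒜 := L - qa with hDdef
  set E : 𝒜 := L - qb with hEdef
  set z : 𝒜 := s * p + t * P + t * (w * s) with hzdef
  -- quantified push/annihilation rules
  have App : ∀ X : 𝒜, p * (p * X) = p * X := fun X => by rw [← mul_assoc, hp.eq]
  have hPP : P * P = P := (hp.one_sub).eq
  have APP : ∀ X : 𝒜, P * (P * X) = P * X := fun X => by rw [← mul_assoc, hPP]
  have ApP : ∀ X : 𝒜, p * (P * X) = 0 := fun X => by rw [← mul_assoc, hpP, zero_mul]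
  have APp : ∀ X : 𝒜, P * (p * X) = 0 := fun X => by rw [← mul_assoc, hPp, zero_mul]
  have Aps : ∀ X : 𝒜, p * (s * X) = s * (p * X) := fun X => by
    rw [← mul_assoc, hps, mul_assoc]
  have Apt : ∀ X : 𝒜, p * (t * X) = t * (p * X) := fun X => by
    rw [← mul_assoc, hpt, mul_assoc]
  have APs : ∀ X : 𝒜, P * (s * X) = s * (P * X) := fun X => by
    rw [← mul_assoc, hPs, mul_assoc]
  have APt : ∀ X : 𝒜, P * (t * X) = t * (P * X) := fun X => by
    rw [← mul_assoc, hPt, mul_assoc]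
  have ApD : ∀ X : 𝒜, p * (D * X) = D * (p * X) := fun X => by
    rw [← mul_assoc, hpD, mul_assoc]
  have ApE : ∀ X : 𝒜, p * (E * X) = E * (p * X) := fun X => by
    rw [← mul_assoc, hpE, mul_assoc]
  have APD : ∀ X : 𝒜, P * (D * X) = D * (P * X) := fun X => by
    rw [← mul_assoc, hPD, mul_assoc]
  have APE : ∀ X : 𝒜, P * (E * X) = E * (P * X) := fun X => by
    rw [← mul_assoc, hPE, mul_assoc]
  have ADs : ∀ X : 𝒜, D * (s * X) = X := fun X => by
    rw [← mul_assoc, hDs, one_mul]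
  have AsD : ∀ X : 𝒜, s * (D * X) = X := fun X => by
    rw [← mul_assoc, hsD, one_mul]
  have AEt : ∀ X : 𝒜, E * (t * X) = X := fun X => by
    rw [← mul_assoc, hEt, one_mul]
  have AtE : ∀ X : 𝒜, t * (E * X) = X := fun X => by
    rw [← mul_assoc, htE, one_mul]
  have Apw : ∀ X : 𝒜, p * (w * X) = 0 := fun X => by rw [← mul_assoc, h6, zero_mul]
  have APw : ∀ X : 𝒜, P * (w * X) = w * X := fun X => by rw [← mul_assoc, hPw]
  have Awp : ∀ X : 𝒜, w * (p * X) = w * X := fun X => by rw [← mul_assoc, h5]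
  have AwPz : ∀ X : 𝒜, w * (P * X) = 0 := fun X => by rw [← mul_assoc, hwP, zero_mul]
  have Aww : ∀ X : 𝒜, w * (w * X) = 0 := fun X => by rw [← mul_assoc, hww, zero_mul]
  have Awt : ∀ X : 𝒜, w * (t * X) = M * (w * X) := fun X => by
    rw [← mul_assoc, hwt, mul_assoc]
  have Asw : ∀ X : 𝒜, s * (w * X) = M * (w * X) := fun X => by
    rw [← mul_assoc, hsw, mul_assoc]
  have AwM : ∀ X : 𝒜, w * (M * X) = M * (w * X) := fun X => by
    rw [← mul_assoc, ← hMc, mul_assoc]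
  have R1 : w * (s * p) = w * s := by rw [← hps, ← mul_assoc, h5]
  have R2 : w * (s * (E * P)) = 0 := by
    conv_lhs => rw [← h5]
    rw [mul_assoc, Aps, ApE, hpP, mul_zero, mul_zero, mul_zero]
  have key1 : (L - (qa + w + qb)) * z = 1 := by
    rw [hdec, hzdef]
    simp only [mul_add, add_mul, sub_mul, mul_sub, mul_assoc, App, APP, ApP, APp, Aps, Apt,
      APs, APt, ApD, ApE, APD, APE, ADs, AsD, AEt, AtE, Apw, APw, Awp, AwPz, Aww, Awt, Asw, AwM,
      R1, R2, hp.eq, hPP, hpP, hPp, h5, h6, hwP, hPw, hww, hsw, hwt,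
      mul_zero, zero_mul, add_zero, zero_add, mul_one, one_mul, sub_zero, zero_sub]
    rw [hPdef]; abel
  have key2 : z * (L - (qa + w + qb)) = 1 := by
    rw [hdec, hzdef]
    simp only [mul_add, add_mul, sub_mul, mul_sub, mul_assoc, App, APP, ApP, APp, Aps, Apt,
      APs, APt, ApD, ApE, APD, APE, ADs, AsD, AEt, AtE, Apw, APw, Awp, AwPz, Aww, Awt, Asw, AwM,
      R1, R2, hp.eq, hPP, hpP, hPp, h5, h6, hwP, hPw, hww, hsw, hwt,
      mul_zero, zero_mul, add_zero, zero_add, mul_one, one_mul, sub_zero, zero_sub]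
    rw [hPdef]; abel
  exact ⟨⟨L - (qa + w + qb), z, key1, key2⟩, rfl⟩

lemma IsQuasinilpotent.norm_pow_le {q : 𝒜} (h : IsQuasinilpotent q) {ε : ℝ} (hε : 0 < ε) :
    ∀ᶠ n : ℕ in atTop, ‖q ^ n‖ ≤ ε ^ n := by
  have H := spectrum.pow_nnnorm_pow_one_div_tendsto_nhds_spectralRadius q
  rw [h] at H
  have hε' : (0:ℝ≥0∞) < ENNReal.ofReal ε := by simpa using hε
  have H2 : ∀ᶠ n : ℕ in atTop, (‖q ^ n‖₊ : ℝ≥0∞) ^ (1 / (n:ℝ)) < ENNReal.ofReal ε :=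
    H.eventually_lt_const hε'
  filter_upwards [H2, eventually_ge_atTop 1] with n hn hn1
  have hne : (n:ℝ) ≠ 0 := by positivity
  have : ((‖q ^ n‖₊ : ℝ≥0∞) ^ (1 / (n:ℝ))) ^ (n:ℝ) ≤ (ENNReal.ofReal ε) ^ (n:ℝ) :=
    ENNReal.rpow_le_rpow hn.le (by positivity)
  rw [← ENNReal.rpow_mul, one_div, inv_mul_cancel₀ hne, ENNReal.rpow_one] at this
  rw [ENNReal.rpow_natCast, ← ENNReal.ofReal_pow hε.le] at this
  calc ‖q ^ n‖ = ((‖q ^ n‖₊ : ℝ≥0∞)).toReal := by simp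
    _ ≤ (ENNReal.ofReal (ε ^ n)).toReal := ENNReal.toReal_mono (by simp) this
    _ = ε ^ n := ENNReal.toReal_ofReal (by positivity)

/-- Lemma 1.1: generalized Drazin inverse of a block lower-triangular element. -/
theorem stmt0 (p a b c ad bd : 𝒜) (hp : IsIdempotentElem p)
    (ha : a = p * a * p) (hb : b = (1 - p) * b * (1 - p)) (hc : c = (1 - p) * c * p)
    (had : IsGDrazinInverse a ad) (had' : ad = p * ad * p)
    (hbd : IsGDrazinInverse b bd) (hbd' : bd = (1 - p) * bd * (1 - p)) :
    IsGDrazinInverse (a + c + b)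
      (ad +
        ((∑' n : ℕ, bd ^ (n + 2) * c * a ^ n * (p - a * ad)) +
          (∑' n : ℕ, ((1 - p) - b * bd) * b ^ n * c * ad ^ (n + 2)) - bd * c * ad) +
        bd) := by
  obtain ⟨had1, had2, had3⟩ := had
  obtain ⟨hbd1, hbd2, hbd3⟩ := hbd
  have hpp : p * p = p := hp.eq
  have hPP : (1 - p) * (1 - p) = (1 - p) := (hp.one_sub).eq
  -- basic projection facts
  have hpa : p * a = a := by
    conv_lhs => rw [ha, ← mul_assoc, ← mul_assoc, hpp]
    exact ha.symm
  have hap : a * p = a := by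
    conv_lhs => rw [ha, mul_assoc, hpp]
    exact ha.symm
  have hpad : p * ad = ad := by
    conv_lhs => rw [had', ← mul_assoc, ← mul_assoc, hpp]
    exact had'.symm
  have hadp : ad * p = ad := by
    conv_lhs => rw [had', mul_assoc, hpp]
    exact had'.symm
  have hPb : (1 - p) * b = b := by
    conv_lhs => rw [hb, ← mul_assoc, ← mul_assoc, hPP]
    exact hb.symm
  have hbP : b * (1 - p) = b := by
    conv_lhs => rw [hb, mul_assoc, hPP]
    exact hb.symm
  have hPbd : (1 - p) * bd = bd := by
    conv_lhs => rw [hbd', ← mul_assoc, ← mul_assoc, hPP]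
    exact hbd'.symm
  have hbdP : bd * (1 - p) = bd := by
    conv_lhs => rw [hbd', mul_assoc, hPP]
    exact hbd'.symm
  have hpb : p * b = 0 := by
    have h' := hPb; rw [one_sub_mul] at h'
    exact sub_eq_self.mp h'
  have hbp : b * p = 0 := by
    have h' := hbP; rw [mul_one_sub] at h'
    exact sub_eq_self.mp h'
  have hpbd : p * bd = 0 := by
    have h' := hPbd; rw [one_sub_mul] at h'
    exact sub_eq_self.mp h'
  have hbdp : bd * p = 0 := by
    have h' := hbdP; rw [mul_one_sub] at h'
    exact sub_eq_self.mp h'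
  have hcp : c * p = c := by
    conv_lhs => rw [hc, mul_assoc, hpp]
    exact hc.symm
  have hPc : (1 - p) * c = c := by
    conv_lhs => rw [hc, ← mul_assoc, ← mul_assoc, hPP]
    exact hc.symm
  have hpc : p * c = 0 := by
    have h' := hPc; rw [one_sub_mul] at h'
    exact sub_eq_self.mp h'
  have hcP : c * (1 - p) = 0 := by rw [mul_one_sub, hcp, sub_self]
  have haP : a * (1 - p) = 0 := by rw [mul_one_sub, hap, sub_self]
  have hadP : ad * (1 - p) = 0 := by rw [mul_one_sub, hadp, sub_self]
  -- mixed zero products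
  have hPp : (1-p) * p = 0 := by rw [one_sub_mul, hpp, sub_self]
  have hpP : p * (1-p) = 0 := by rw [mul_one_sub, hpp, sub_self]
  have hPa : (1-p) * a = 0 := by
    have : (1-p) * (p * a) = 0 := by rw [← mul_assoc, hPp, zero_mul]
    rwa [hpa] at this
  have hPad : (1-p) * ad = 0 := by
    have : (1-p) * (p * ad) = 0 := by rw [← mul_assoc, hPp, zero_mul]
    rwa [hpad] at this
  have hab : a * b = 0 := by
    have : a * ((1-p) * b) = 0 := by rw [← mul_assoc, haP, zero_mul]
    rwa [hPb] at this
  have hba : b * a = 0 := by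
    have : b * (p * a) = 0 := by rw [← mul_assoc, hbp, zero_mul]
    rwa [hpa] at this
  have habd : a * bd = 0 := by
    have : a * ((1-p) * bd) = 0 := by rw [← mul_assoc, haP, zero_mul]
    rwa [hPbd] at this
  have hbda : bd * a = 0 := by
    have : bd * (p * a) = 0 := by rw [← mul_assoc, hbdp, zero_mul]
    rwa [hpa] at this
  have hadb : ad * b = 0 := by
    have : ad * ((1-p) * b) = 0 := by rw [← mul_assoc, hadP, zero_mul]
    rwa [hPb] at this
  have hbad : b * ad = 0 := by
    have : b * (p * ad) = 0 := by rw [← mul_assoc, hbp, zero_mul]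
    rwa [hpad] at this
  have hadbd : ad * bd = 0 := by
    have : ad * ((1-p) * bd) = 0 := by rw [← mul_assoc, hadP, zero_mul]
    rwa [hPbd] at this
  have hbdad : bd * ad = 0 := by
    have : bd * (p * ad) = 0 := by rw [← mul_assoc, hbdp, zero_mul]
    rwa [hpad] at this
  have hac : a * c = 0 := by
    have : a * ((1-p) * c) = 0 := by rw [← mul_assoc, haP, zero_mul]
    rwa [hPc] at this
  have hadc : ad * c = 0 := by
    have : ad * ((1-p) * c) = 0 := by rw [← mul_assoc, hadP, zero_mul]
    rwa [hPc] at this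
  have hcb : c * b = 0 := by
    have : c * ((1-p) * b) = 0 := by rw [← mul_assoc, hcP, zero_mul]
    rwa [hPb] at this
  have hcbd : c * bd = 0 := by
    have : c * ((1-p) * bd) = 0 := by rw [← mul_assoc, hcP, zero_mul]
    rwa [hPbd] at this
  have hcc : c * c = 0 := by
    have : c * ((1-p) * c) = 0 := by rw [← mul_assoc, hcP, zero_mul]
    rwa [hPc] at this
  -- derived Drazin facts
  have haa : a * ad * ad = ad := by rw [had2, had1]
  have hbb : b * bd * bd = bd := by rw [hbd2, hbd1]
  -- set the projections
  set aπ : 𝒜 := p - a * ad with haπdef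
  set bπ : 𝒜 := (1 - p) - b * bd with hbπdef
  have epa : p * (a * ad) = a * ad := by rw [← mul_assoc, hpa]
  have eap : (a * ad) * p = a * ad := by rw [mul_assoc, hadp]
  have eaa : (a * ad) * (a * ad) = a * ad := by
    rw [mul_assoc, ← mul_assoc ad a ad, had1]
  have ePb : (1-p) * (b * bd) = b * bd := by rw [← mul_assoc, hPb]
  have ebP : (b * bd) * (1-p) = b * bd := by rw [mul_assoc, hbdP]
  have ebb : (b * bd) * (b * bd) = b * bd := by
    rw [mul_assoc, ← mul_assoc bd b bd, hbd1]
  have haπad : aπ * ad = 0 := by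
    rw [haπdef, sub_mul, hpad, haa, sub_self]
  have hadaπ : ad * aπ = 0 := by
    rw [haπdef, mul_sub, hadp, ← mul_assoc, had1, sub_self]
  have haπa : aπ * a = a * aπ := by
    have e1 : aπ * a = a - a * (a * ad) := by
      rw [haπdef, sub_mul, hpa, mul_assoc, ← had2]
    have e2 : a * aπ = a - a * (a * ad) := by rw [haπdef, mul_sub, hap]
    rw [e1, e2]
  have haπaπ : aπ * aπ = aπ := by
    rw [haπdef, sub_mul, mul_sub, mul_sub, hpp, epa, eap, eaa]
    abel
  have haπp : aπ * p = aπ := by rw [haπdef, sub_mul, hpp, eap]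
  have hpaπ : p * aπ = aπ := by rw [haπdef, mul_sub, hpp, epa]
  have haπb : aπ * b = 0 := by
    rw [haπdef, sub_mul, hpb, mul_assoc, hadb, mul_zero, sub_zero]
  have haπbd : aπ * bd = 0 := by
    rw [haπdef, sub_mul, hpbd, mul_assoc, hadbd, mul_zero, sub_zero]
  have haπc : aπ * c = 0 := by
    rw [haπdef, sub_mul, hpc, mul_assoc, hadc, mul_zero, sub_zero]
  have hbπbd : bπ * bd = 0 := by
    rw [hbπdef, sub_mul, hPbd, hbb, sub_self]
  have hbdbπ : bd * bπ = 0 := by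
    rw [hbπdef, mul_sub, hbdP, ← mul_assoc, hbd1, sub_self]
  have hbπb : bπ * b = b * bπ := by
    have e1 : bπ * b = b - b * (b * bd) := by
      rw [hbπdef, sub_mul, hPb, mul_assoc, ← hbd2]
    have e2 : b * bπ = b - b * (b * bd) := by rw [hbπdef, mul_sub, hbP]
    rw [e1, e2]
  have hbπP : bπ * (1-p) = bπ := by rw [hbπdef, sub_mul, hPP, ebP]
  have hbπbbd : bπ * (b * bd) = 0 := by
    rw [← mul_assoc, hbπb, mul_assoc, hbπbd, mul_zero]
  have hbπbπ : bπ * bπ = bπ := by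
    nth_rewrite 2 [hbπdef]
    rw [mul_sub, hbπP, hbπbbd, sub_zero]
  have habπ : a * bπ = 0 := by
    rw [hbπdef, mul_sub, haP, ← mul_assoc, hab, zero_mul, sub_self]
  have hcbπ : c * bπ = 0 := by
    rw [hbπdef, mul_sub, hcP, ← mul_assoc, hcb, zero_mul, sub_self]
  have hadbπ : ad * bπ = 0 := by
    rw [hbπdef, mul_sub, hadP, ← mul_assoc, hadb, zero_mul, sub_self]
  have hbπp : bπ * p = 0 := by
    rw [hbπdef, sub_mul, hPp, mul_assoc, hbdp, mul_zero, sub_self]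
  have hbπc : bπ * c = c - b * (bd * c) := by
    rw [hbπdef, sub_mul, hPc, mul_assoc]
  have hcaπ : c * aπ = c - c * (a * ad) := by rw [haπdef, mul_sub, hcp]
  -- power absorption lemmas
  have haπna : aπ * (a * aπ) = a * aπ := by
    rw [← mul_assoc, haπa, mul_assoc, haπaπ]
  have hbπnb : bπ * (b * bπ) = b * bπ := by
    rw [← mul_assoc, hbπb, mul_assoc, hbπbπ]
  have hapow : ∀ n : ℕ, a ^ n * aπ = (a * aπ) ^ n * aπ := by
    have aux : ∀ m : ℕ, aπ * ((a * aπ) ^ m * aπ) = (a * aπ) ^ m * aπ := by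
      intro m
      induction m with
      | zero => simp [haπaπ]
      | succ m ihm =>
        rw [pow_succ', mul_assoc, ← mul_assoc aπ (a*aπ), haπna, ← mul_assoc, ← pow_succ']
    intro n
    induction n with
    | zero => simp
    | succ n ih =>
      rw [pow_succ', mul_assoc, ih, pow_succ' (a*aπ), mul_assoc, mul_assoc, aux n]
  have hnbbπ : (b * bπ) * bπ = b * bπ := by rw [mul_assoc, hbπbπ]
  have hbπpow : ∀ n : ℕ, bπ * b ^ n = (b * bπ) ^ n * bπ := by
    intro n
    induction n with
    | zero => simp
    | succ n ih =>
      rw [pow_succ, ← mul_assoc, ih, mul_assoc, hbπb, pow_succ (b*bπ), mul_assoc, hnbbπ]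
  -- the series
  set F1 : ℕ → 𝒜 := fun n => bd ^ (n + 2) * c * a ^ n * aπ with hF1def
  set F2 : ℕ → 𝒜 := fun n => bπ * b ^ n * c * ad ^ (n + 2) with hF2def
  have hQna : IsQuasinilpotent (a * aπ) := by
    have : a * aπ = a - a ^ 2 * ad := by
      rw [haπdef, mul_sub, hap, ← mul_assoc, ← pow_two]
    rw [this]; exact had3
  have hQnb : IsQuasinilpotent (b * bπ) := by
    have : b * bπ = b - b ^ 2 * bd := by
      rw [hbπdef, mul_sub, hbP, ← mul_assoc, ← pow_two]
    rw [this]; exact hbd3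
  -- summability of F1
  have hf1 : Summable F1 := by
    obtain ⟨ε, hε, hhalf⟩ : ∃ ε : ℝ, 0 < ε ∧ (‖bd‖ + 1) * ε = 1/2 := by
      have hbd0 : (0:ℝ) < ‖bd‖ + 1 := by positivity
      exact ⟨(1/2) / (‖bd‖ + 1), by positivity, by field_simp⟩
    have hev := hQna.norm_pow_le hε
    apply Summable.of_norm_bounded_eventually_nat
      (g := fun n => ((‖bd‖+1)^2 * ‖c‖ * ‖aπ‖) * (1/2)^n)
      (((summable_geometric_of_lt_one (by norm_num) (by norm_num)).mul_left _))
    filter_upwards [hev] with n hn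
    have e : F1 n = (bd ^ (n+2) * c) * ((a * aπ) ^ n * aπ) := by
      rw [hF1def]
      show bd ^ (n + 2) * c * a ^ n * aπ = _
      rw [mul_assoc (bd ^ (n+2) * c), hapow n]
    calc ‖F1 n‖ = ‖(bd ^ (n+2) * c) * ((a * aπ) ^ n * aπ)‖ := by rw [e]
      _ ≤ ‖bd ^ (n+2) * c‖ * ‖(a * aπ) ^ n * aπ‖ := norm_mul_le _ _
      _ ≤ (‖bd ^ (n+2)‖ * ‖c‖) * (‖(a * aπ) ^ n‖ * ‖aπ‖) :=
          mul_le_mul (norm_mul_le _ _) (norm_mul_le _ _) (norm_nonneg _) (by positivity)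
      _ ≤ ((‖bd‖+1)^(n+2) * ‖c‖) * (ε^n * ‖aπ‖) := by
          apply mul_le_mul
          · apply mul_le_mul_of_nonneg_right _ (norm_nonneg c)
            calc ‖bd ^ (n+2)‖ ≤ ‖bd‖^(n+2) := norm_pow_le' bd (by omega)
              _ ≤ (‖bd‖+1)^(n+2) := by
                  apply pow_le_pow_left₀ (norm_nonneg bd) (by linarith)
          · exact mul_le_mul_of_nonneg_right hn (norm_nonneg _)
          · positivity
          · positivity
      _ = ((‖bd‖+1)^2 * ‖c‖ * ‖aπ‖) * (((‖bd‖+1) * ε)^n) := by rw [mul_pow]; ring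
      _ = ((‖bd‖+1)^2 * ‖c‖ * ‖aπ‖) * (1/2)^n := by rw [hhalf]
  -- summability of F2
  have hf2 : Summable F2 := by
    obtain ⟨ε, hε, hhalf⟩ : ∃ ε : ℝ, 0 < ε ∧ (‖ad‖ + 1) * ε = 1/2 := by
      have had0 : (0:ℝ) < ‖ad‖ + 1 := by positivity
      exact ⟨(1/2) / (‖ad‖ + 1), by positivity, by field_simp⟩
    have hev := hQnb.norm_pow_le hε
    apply Summable.of_norm_bounded_eventually_nat
      (g := fun n => (‖bπ‖ * ‖c‖ * (‖ad‖+1)^2) * (1/2)^n)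
      (((summable_geometric_of_lt_one (by norm_num) (by norm_num)).mul_left _))
    filter_upwards [hev] with n hn
    have e : F2 n = ((b * bπ) ^ n * (bπ * c)) * ad ^ (n+2) := by
      rw [hF2def]
      show bπ * b ^ n * c * ad ^ (n + 2) = _
      rw [hbπpow n, mul_assoc ((b*bπ)^n) bπ c]
    calc ‖F2 n‖ = ‖((b * bπ) ^ n * (bπ * c)) * ad ^ (n+2)‖ := by rw [e]
      _ ≤ (‖(b * bπ) ^ n‖ * ‖bπ * c‖) * ‖ad ^ (n+2)‖ :=
          mul_le_mul_of_nonneg_right (norm_mul_le _ _) (norm_nonneg _) |>.trans'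
            (norm_mul_le _ _) |>.trans (le_refl _)
      _ ≤ (ε^n * (‖bπ‖ * ‖c‖)) * (‖ad‖+1)^(n+2) := by
          apply mul_le_mul
          · exact mul_le_mul hn (norm_mul_le _ _) (norm_nonneg _) (by positivity)
          · calc ‖ad ^ (n+2)‖ ≤ ‖ad‖^(n+2) := norm_pow_le' ad (by omega)
              _ ≤ (‖ad‖+1)^(n+2) := by
                  apply pow_le_pow_left₀ (norm_nonneg ad) (by linarith)
          · positivity
          · positivity
      _ = (‖bπ‖ * ‖c‖ * (‖ad‖+1)^2) * (((‖ad‖+1) * ε)^n) := by rw [mul_pow]; ring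
      _ = (‖bπ‖ * ‖c‖ * (‖ad‖+1)^2) * (1/2)^n := by rw [hhalf]
  set S1 : 𝒜 := tsum F1 with hS1def
  set S2 : 𝒜 := tsum F2 with hS2def
  -- helpers
  have Z : ∀ {u v : 𝒜}, u * v = 0 → ∀ X : 𝒜, u * (v * X) = 0 := by
    intro u v h X; rw [← mul_assoc, h, zero_mul]
  have E : ∀ {u v r : 𝒜}, u * v = r → ∀ X : 𝒜, u * (v * X) = r * X := by
    intro u v r h X; rw [← mul_assoc, h]
  have hbbd2 : b * (bd * bd) = bd := by rw [← mul_assoc, hbd2, hbd1]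
  have hbpow : ∀ m : ℕ, b * bd ^ (m + 2) = bd ^ (m + 1) := by
    intro m
    rw [show m + 2 = 2 + m from Nat.add_comm m 2, pow_add, pow_two, ← mul_assoc, hbbd2,
      ← pow_succ']
  have Abb : ∀ (m : ℕ) (X : 𝒜), b * (bd ^ (m + 2) * X) = bd ^ (m + 1) * X := fun m X => by
    rw [← mul_assoc, hbpow m]
  have hadpa : ∀ m : ℕ, ad ^ (m + 2) * a = ad ^ (m + 1) := by
    intro m
    rw [pow_add, pow_two, mul_assoc, mul_assoc, ← had2, ← mul_assoc ad a ad, had1, ← pow_succ]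
  -- termwise facts for F1
  have haF1 : ∀ n, a * F1 n = 0 := fun n => by
    rw [hF1def]; simp only [pow_succ', mul_assoc]; rw [Z habd]
  have hcF1 : ∀ n, c * F1 n = 0 := fun n => by
    rw [hF1def]; simp only [pow_succ', mul_assoc]; rw [Z hcbd]
  have hF1ad : ∀ n, F1 n * ad = 0 := fun n => by
    rw [hF1def]; simp only [mul_assoc, haπad, mul_zero]
  have hF1c : ∀ n, F1 n * c = 0 := fun n => by
    rw [hF1def]; simp only [mul_assoc, haπc, mul_zero]
  have hF1b : ∀ n, F1 n * b = 0 := fun n => by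
    rw [hF1def]; simp only [mul_assoc, haπb, mul_zero]
  have haS1 : a * S1 = 0 := by
    calc a * S1 = ∑' n, a * F1 n := (hf1.tsum_mul_left a).symm
    _ = 0 := by simp [haF1]
  have hcS1 : c * S1 = 0 := by
    calc c * S1 = ∑' n, c * F1 n := (hf1.tsum_mul_left c).symm
    _ = 0 := by simp [hcF1]
  have hS1ad : S1 * ad = 0 := by
    calc S1 * ad = ∑' n, F1 n * ad := (hf1.tsum_mul_right ad).symm
    _ = 0 := by simp [hF1ad]
  have hS1c : S1 * c = 0 := by
    calc S1 * c = ∑' n, F1 n * c := (hf1.tsum_mul_right c).symm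
    _ = 0 := by simp [hF1c]
  have hS1b : S1 * b = 0 := by
    calc S1 * b = ∑' n, F1 n * b := (hf1.tsum_mul_right b).symm
    _ = 0 := by simp [hF1b]
  have hbF1 : ∀ n, b * F1 n = bd ^ (n+1) * (c * (a ^ n * aπ)) := fun n => by
    rw [hF1def]; simp only [mul_assoc]; exact Abb n _
  have hF1a : ∀ n, F1 n * a = bd ^ (n+2) * (c * (a ^ (n+1) * aπ)) := fun n => by
    rw [hF1def]; simp only [mul_assoc, pow_succ]; rw [haπa]
  have hbS1 : b * S1 = bd * (c * aπ) + S1 * a := by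
    calc b * S1 = ∑' n, b * F1 n := (hf1.tsum_mul_left b).symm
    _ = ∑' n, bd ^ (n+1) * (c * (a ^ n * aπ)) := tsum_congr hbF1
    _ = bd ^ (0+1) * (c * (a ^ 0 * aπ))
        + ∑' n, bd ^ (n+1+1) * (c * (a ^ (n+1) * aπ)) :=
        Summable.tsum_eq_zero_add ((hf1.mul_left b).congr hbF1)
    _ = bd * (c * aπ) + ∑' n, F1 n * a := by
        congr 1
        · simp
        · exact tsum_congr fun n => (hF1a n).symm
    _ = bd * (c * aπ) + S1 * a := by rw [hf1.tsum_mul_right a]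
  have hbbdF1 : ∀ n, (b * bd) * F1 n = F1 n := fun n => by
    rw [hF1def]; simp only [mul_assoc]
    conv_lhs => rw [← mul_assoc bd (bd^(n+2)), ← pow_succ']
    exact Abb (n+1) _
  have hbbdS1 : (b * bd) * S1 = S1 := by
    calc (b * bd) * S1 = ∑' n, (b * bd) * F1 n := (hf1.tsum_mul_left (b*bd)).symm
    _ = ∑' n, F1 n := tsum_congr hbbdF1
    _ = S1 := rfl
  -- termwise facts for F2
  have haF2 : ∀ n, a * F2 n = 0 := fun n => by
    rw [hF2def]; simp only [mul_assoc]; rw [Z habπ]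
  have hcF2 : ∀ n, c * F2 n = 0 := fun n => by
    rw [hF2def]; simp only [mul_assoc]; rw [Z hcbπ]
  have hbdF2 : ∀ n, bd * F2 n = 0 := fun n => by
    rw [hF2def]; simp only [mul_assoc]; rw [Z hbdbπ]
  have hF2c : ∀ n, F2 n * c = 0 := fun n => by
    rw [hF2def]; simp only [mul_assoc, pow_succ, hadc, mul_zero]
  have hF2b : ∀ n, F2 n * b = 0 := fun n => by
    rw [hF2def]; simp only [mul_assoc, pow_succ, hadb, mul_zero]
  have haS2 : a * S2 = 0 := by
    calc a * S2 = ∑' n, a * F2 n := (hf2.tsum_mul_left a).symm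
    _ = 0 := by simp [haF2]
  have hcS2 : c * S2 = 0 := by
    calc c * S2 = ∑' n, c * F2 n := (hf2.tsum_mul_left c).symm
    _ = 0 := by simp [hcF2]
  have hbdS2 : bd * S2 = 0 := by
    calc bd * S2 = ∑' n, bd * F2 n := (hf2.tsum_mul_left bd).symm
    _ = 0 := by simp [hbdF2]
  have hS2c : S2 * c = 0 := by
    calc S2 * c = ∑' n, F2 n * c := (hf2.tsum_mul_right c).symm
    _ = 0 := by simp [hF2c]
  have hS2b : S2 * b = 0 := by
    calc S2 * b = ∑' n, F2 n * b := (hf2.tsum_mul_right b).symm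
    _ = 0 := by simp [hF2b]
  have hF2a : ∀ n, F2 n * a = bπ * (b ^ n * (c * ad ^ (n+1))) := fun n => by
    rw [hF2def]; simp only [mul_assoc]; rw [hadpa n]
  have hF2aad : ∀ n, (F2 n * a) * ad = F2 n := fun n => by
    rw [hF2a n, hF2def]; simp only [mul_assoc, ← pow_succ]
  have hS2aad : S2 * (a * ad) = S2 := by
    calc S2 * (a * ad) = (S2 * a) * ad := (mul_assoc _ _ _).symm
    _ = (∑' n, F2 n * a) * ad := by rw [hf2.tsum_mul_right a]
    _ = ∑' n, (F2 n * a) * ad := ((hf2.mul_right a).tsum_mul_right ad).symm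
    _ = ∑' n, F2 n := tsum_congr hF2aad
    _ = S2 := rfl
  have hbF2 : ∀ n, b * F2 n = bπ * (b ^ (n+1) * (c * ad ^ (n+2))) := fun n => by
    rw [hF2def]; simp only [mul_assoc]
    rw [← mul_assoc b bπ, ← hbπb, mul_assoc, ← mul_assoc b (b^n), ← pow_succ']
  have hS2a_eq : S2 * a = bπ * (c * ad) + b * S2 := by
    calc S2 * a = ∑' n, F2 n * a := (hf2.tsum_mul_right a).symm
    _ = ∑' n, bπ * (b ^ n * (c * ad ^ (n+1))) := tsum_congr hF2a
    _ = bπ * (b ^ 0 * (c * ad ^ (0+1)))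
        + ∑' n, bπ * (b ^ (n+1) * (c * ad ^ (n+1+1))) :=
        Summable.tsum_eq_zero_add ((hf2.mul_right a).congr hF2a)
    _ = bπ * (c * ad) + ∑' n, b * F2 n := by
        congr 1
        · simp
        · exact tsum_congr fun n => (hbF2 n).symm
    _ = bπ * (c * ad) + b * S2 := by rw [hf2.tsum_mul_left b]
  have hbS2 : b * S2 = S2 * a - bπ * (c * ad) := by rw [hS2a_eq]; abel
  set x : 𝒜 := a + c + b with hxdef
  set y : 𝒜 := ad + (S1 + S2 - bd * c * ad) + bd with hydef
  -- the product computations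
  have had1' : ad * (a * ad) = ad := by rw [← mul_assoc, had1]
  have B1 : S1 * (a * ad) = 0 := by rw [had2, ← mul_assoc, hS1ad, zero_mul]
  have C1 : bd * (b * S1) = S1 := by rw [← mul_assoc, ← hbd2, hbbdS1]
  have C2 : bd * (b * S2) = 0 := by rw [← mul_assoc, ← hbd2, mul_assoc, hbdS2, mul_zero]
  have C3 : ∀ X : 𝒜, bd * (b * (bd * X)) = bd * X := fun X => by
    rw [← mul_assoc, ← mul_assoc, hbd1]
  have C4 : bd * (b * bd) = bd := by rw [← mul_assoc, hbd1]
  have hxy : x * y = a * ad + c * ad + bd * (c * aπ) + S1 * a + S2 * a - bπ * (c * ad)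
      - b * (bd * (c * ad)) + b * bd := by
    rw [hxdef, hydef]
    simp only [mul_add, add_mul, mul_sub, mul_assoc, haS1, haS2, hcS1, hcS2, hbS1, hbS2,
      hbad, Z habd, habd, Z hcbd, hcbd, mul_zero, zero_mul, add_zero, zero_add, sub_zero,
      zero_sub]
    abel
  have hyx : y * x = ad * a + S1 * a + S2 * a - bd * (c * (ad * a)) + bd * c + bd * b := by
    rw [hxdef, hydef]
    simp only [add_mul, sub_mul, mul_add, mul_assoc, hadc, hadb, hS1c, hS1b, hS2c, hS2b,
      hbda, mul_zero, zero_mul, add_zero, zero_add]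
    abel
  have e1 : bd * (c * aπ) = bd * c - bd * (c * (a * ad)) := by rw [hcaπ, mul_sub]
  have e2 : bπ * (c * ad) = c * ad - b * (bd * (c * ad)) := by
    rw [← mul_assoc, hbπc, sub_mul, mul_assoc, mul_assoc]
  have hcomm : x * y = y * x := by
    rw [hxy, hyx, e1, e2, had2, hbd2]
    abel
  have hyxy : y * x * y = y := by
    rw [hyx, hydef]
    simp only [add_mul, sub_mul, mul_add, mul_sub, mul_assoc, had1', haS1, haS2, habd,
      Z habd, hbad, hcS1, hcS2, hcbd, Z hcbd, hS2aad, B1, C1, C2, C3, C4,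
      mul_zero, zero_mul, add_zero, zero_add, sub_zero, zero_sub]
    abel
  have had3' : IsQuasinilpotent (a - a * (a * ad)) := by
    have h := had3; rw [pow_two, mul_assoc] at h; exact h
  have hbd3' : IsQuasinilpotent (b - b * (b * bd)) := by
    have h := hbd3; rw [pow_two, mul_assoc] at h; exact h
  have hdecomp : x - x ^ 2 * y = (a - a * (a * ad))
      + (c - c * (a * ad) - b * (c * ad) - b * (bd * (c * aπ)) - b * (S1 * a) - b * (S2 * a)
        + b * (bπ * (c * ad)) + b * (b * (bd * (c * ad))))
      + (b - b * (b * bd)) := by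
    rw [pow_two, mul_assoc, hxy, hxdef]
    simp only [mul_add, mul_sub, add_mul, mul_assoc, Z hac, Z habd, Z haS1, Z haS2, Z habπ,
      Z hab, Z hcc, Z hcbd, Z hcS1, Z hcS2, Z hcbπ, Z hcb, Z hba,
      mul_zero, zero_mul, add_zero, zero_add, sub_zero, zero_sub]
    abel
  refine ⟨?_, ?_, ?_⟩
  · exact hyxy
  · exact hcomm
  · rw [hdecomp]
    apply quasinilpotent_triangular hp
    · simp only [sub_mul, mul_assoc, hadp, hap]
    · simp only [mul_sub, E hpa, hpa]
    · simp only [sub_mul, mul_assoc, hbdp, hbp, mul_zero, sub_zero]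
    · simp only [mul_sub, hpb, Z hpb, sub_zero]
    · simp only [sub_mul, add_mul, mul_assoc, hadp, hap, haπp, hcp]
    · simp only [mul_sub, mul_add, hpc, Z hpc, Z hpb, sub_zero, add_zero, zero_add, zero_sub,
        neg_zero]
    · exact had3'
    · exact hbd3'
end

section
/- Let a ∈ 𝒜 be quasinilpotent and let b ∈ 𝒜 be generalized Drazin invertible with generalized Drazin inverse b^d and spectral idempotent b^π = 1 − b b^d. If a b = b^π b a b^π, then a + b is generalized Drazin invertible and (a+b)^d = Σ_{n=0}^∞ (b^d)^{n+1} a^n. -/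
variable {𝒜 : Type*} [NormedRing 𝒜] [NormedAlgebra ℂ 𝒜] [CompleteSpace 𝒜]

open Filter Topology ENNReal

lemma qn_exists_bound (x : 𝒜) (hx : IsQuasinilpotent x) {ε : ℝ} (hε : 0 < ε) :
    ∃ M : ℝ, 1 ≤ M ∧ ∀ n : ℕ, ‖x ^ n‖ ≤ M * ε ^ n := by
  have t := spectrum.pow_nnnorm_pow_one_div_tendsto_nhds_spectralRadius x
  rw [hx] at t
  have hev : ∀ᶠ n : ℕ in atTop, (‖x ^ n‖₊ : ℝ≥0∞) ^ (1 / (n : ℝ)) < ENNReal.ofReal ε :=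
    t.eventually_lt_const (by simpa using hε)
  obtain ⟨N, hN⟩ := eventually_atTop.mp hev
  have key : ∀ n : ℕ, N + 1 ≤ n → ‖x ^ n‖ ≤ ε ^ n := by
    intro n hn
    have hn0 : (n : ℝ) ≠ 0 := Nat.cast_ne_zero.mpr (by omega)
    have h1 := hN n (by omega)
    have h2 : ((‖x ^ n‖₊ : ℝ≥0∞) ^ (1 / (n : ℝ))) ^ (n : ℝ) ≤
        (ENNReal.ofReal ε) ^ (n : ℝ) := ENNReal.rpow_le_rpow h1.le (by positivity)
    rw [← ENNReal.rpow_mul, one_div, inv_mul_cancel₀ hn0, ENNReal.rpow_one] at h2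
    rw [ENNReal.ofReal_rpow_of_pos hε, Real.rpow_natCast] at h2
    rw [← enorm_eq_nnnorm, ← ofReal_norm] at h2
    exact (ENNReal.ofReal_le_ofReal_iff (by positivity)).mp h2
  have hS : 0 ≤ ∑ k ∈ Finset.range (N + 1), ‖x ^ k‖ / ε ^ k :=
    Finset.sum_nonneg fun k _ => by positivity
  refine ⟨1 + ∑ k ∈ Finset.range (N + 1), ‖x ^ k‖ / ε ^ k, by linarith, fun n => ?_⟩
  rcases lt_or_ge n (N + 1) with hc | hc
  · have hmem : n ∈ Finset.range (N + 1) := Finset.mem_range.mpr hc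
    have h3 : ‖x ^ n‖ / ε ^ n ≤ ∑ k ∈ Finset.range (N + 1), ‖x ^ k‖ / ε ^ k :=
      Finset.single_le_sum (f := fun k => ‖x ^ k‖ / ε ^ k) (fun k _ => by positivity) hmem
    have hp : (0:ℝ) < ε ^ n := by positivity
    calc ‖x ^ n‖ = ‖x ^ n‖ / ε ^ n * ε ^ n := by field_simp
    _ ≤ (1 + ∑ k ∈ Finset.range (N + 1), ‖x ^ k‖ / ε ^ k) * ε ^ n := by nlinarith
  · have := key n hc
    nlinarith [pow_pos hε n]

lemma qn_of_forall_bound (x : 𝒜)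
    (H : ∀ ε : ℝ, 0 < ε → ∃ M : ℝ, ∀ n : ℕ, ‖x ^ n‖ ≤ M * ε ^ n) :
    IsQuasinilpotent x := by
  have t := spectrum.pow_nnnorm_pow_one_div_tendsto_nhds_spectralRadius x
  refine le_antisymm ?_ zero_le
  refine ENNReal.le_of_forall_pos_le_add fun ε hε _ => ?_
  rw [zero_add]
  obtain ⟨M, hM⟩ := H ((ε : ℝ) / 2) (by positivity)
  have hev2 : ∀ᶠ n : ℕ in atTop, (ENNReal.ofReal M) ^ (1 / (n : ℝ)) ≤ 2 :=
    ENNReal.eventually_pow_one_div_le ENNReal.ofReal_ne_top (by norm_num)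
  have hev : ∀ᶠ n : ℕ in atTop,
      (‖x ^ n‖₊ : ℝ≥0∞) ^ (1 / (n : ℝ)) ≤ (ε : ℝ≥0∞) := by
    filter_upwards [hev2, eventually_ge_atTop 1] with n h2 h1
    have hn0 : (n : ℝ) ≠ 0 := Nat.cast_ne_zero.mpr (by omega)
    have hb : (‖x ^ n‖₊ : ℝ≥0∞) ≤ ENNReal.ofReal M * (ENNReal.ofReal ((ε:ℝ)/2)) ^ (n : ℕ) := by
      rw [← enorm_eq_nnnorm, ← ofReal_norm, ← ENNReal.ofReal_pow (by positivity),
        ← ENNReal.ofReal_mul' (by positivity)]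
      exact ENNReal.ofReal_le_ofReal (hM n)
    calc (‖x ^ n‖₊ : ℝ≥0∞) ^ (1 / (n : ℝ))
        ≤ (ENNReal.ofReal M * (ENNReal.ofReal ((ε:ℝ)/2)) ^ (n : ℕ)) ^ (1 / (n : ℝ)) :=
          ENNReal.rpow_le_rpow hb (by positivity)
      _ = (ENNReal.ofReal M) ^ (1 / (n : ℝ)) * ENNReal.ofReal ((ε:ℝ)/2) := by
          rw [ENNReal.mul_rpow_of_nonneg _ _ (by positivity), ← ENNReal.rpow_natCast
            (ENNReal.ofReal ((ε:ℝ)/2)) n, ← ENNReal.rpow_mul, mul_one_div, div_self hn0,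
            ENNReal.rpow_one]
      _ ≤ 2 * ENNReal.ofReal ((ε:ℝ)/2) := by gcongr
      _ = (ε : ℝ≥0∞) := by
          rw [← ENNReal.ofReal_coe_nnreal, show (2:ℝ≥0∞) = ENNReal.ofReal 2 by simp,
            ← ENNReal.ofReal_mul (by norm_num)]
          rw [show (2:ℝ) * ((ε:ℝ)/2) = (ε:ℝ) by ring, ENNReal.ofReal_coe_nnreal]
  exact le_of_tendsto t hev

lemma qn_add_of_commute {x y : 𝒜} (hxy : Commute x y) (hx : IsQuasinilpotent x)
    (hy : IsQuasinilpotent y) : IsQuasinilpotent (x + y) := by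
  apply qn_of_forall_bound
  intro ε hε
  obtain ⟨Mx, hMx1, Hx⟩ := qn_exists_bound x hx (half_pos hε)
  obtain ⟨My, hMy1, Hy⟩ := qn_exists_bound y hy (half_pos hε)
  refine ⟨Mx * My * ‖(1 : 𝒜)‖, fun n => ?_⟩
  have hMx0 : (0:ℝ) ≤ Mx := by linarith
  have hMy0 : (0:ℝ) ≤ My := by linarith
  calc ‖(x + y) ^ n‖ = ‖∑ k ∈ Finset.range (n + 1), x ^ k * y ^ (n - k) * (n.choose k : 𝒜)‖ := by
        rw [hxy.add_pow]
    _ ≤ ∑ k ∈ Finset.range (n + 1), Mx * (ε/2) ^ k * (My * (ε/2) ^ (n - k)) *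
          ((n.choose k : ℝ) * ‖(1 : 𝒜)‖) := by
        refine (norm_sum_le _ _).trans (Finset.sum_le_sum fun k _ => ?_)
        calc ‖x ^ k * y ^ (n - k) * (n.choose k : 𝒜)‖
            ≤ ‖x ^ k‖ * ‖y ^ (n - k)‖ * ‖(n.choose k : 𝒜)‖ :=
              (norm_mul_le _ _).trans (by
                gcongr
                exact norm_mul_le _ _)
          _ ≤ Mx * (ε/2) ^ k * (My * (ε/2) ^ (n - k)) * ((n.choose k : ℝ) * ‖(1 : 𝒜)‖) := by
              gcongr <;> [exact Hx k; exact Hy (n - k); exact Nat.norm_cast_le _]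
    _ = Mx * My * ‖(1 : 𝒜)‖ * ∑ k ∈ Finset.range (n + 1),
          (ε/2) ^ k * (ε/2) ^ (n - k) * (n.choose k : ℝ) := by
        rw [Finset.mul_sum]; exact Finset.sum_congr rfl fun k _ => by ring
    _ = Mx * My * ‖(1 : 𝒜)‖ * ε ^ n := by rw [← add_pow, add_halves]

lemma qn_of_norm_le {w z : 𝒜} (K : ℝ) (hK : 0 ≤ K) (hz : IsQuasinilpotent z)
    (H : ∀ n : ℕ, ‖w ^ (n + 1)‖ ≤ K * ‖z ^ (n + 1)‖) : IsQuasinilpotent w := by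
  apply qn_of_forall_bound
  intro ε hε
  obtain ⟨M, hM1, HM⟩ := qn_exists_bound z hz hε
  refine ⟨K * M + ‖(1 : 𝒜)‖, fun n => ?_⟩
  match n with
  | 0 => simpa using by nlinarith [norm_nonneg (1 : 𝒜)]
  | (m + 1) =>
    have h1 := H m
    have h2 := HM (m + 1)
    have h3 : (0:ℝ) < ε ^ (m + 1) := by positivity
    nlinarith [norm_nonneg (z ^ (m + 1)), norm_nonneg (1 : 𝒜)]

/-- Lemma 1.2. -/
theorem stmt1 (a b bd : 𝒜) (ha : IsQuasinilpotent a) (hb : IsGDrazinInverse b bd)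
    (h : a * b = (1 - b * bd) * b * a * (1 - b * bd)) :
    IsGDrazinInverse (a + b) (∑' n : ℕ, bd ^ (n + 1) * a ^ n) := by
  obtain ⟨h1, h2, h3⟩ := hb
  -- basic algebraic identities
  have A1 : b * bd * bd = bd := by rw [h2, h1]
  have A0 : (1 - b * bd) * bd = 0 := by rw [sub_mul, one_mul, A1, sub_self]
  have A2 : a * (b * bd) = 0 := by
    rw [← mul_assoc, h, mul_assoc ((1 - b * bd) * b * a) (1 - b * bd) bd, A0, mul_zero]
  have A3 : a * bd = 0 := by rw [← A1, ← mul_assoc, A2, zero_mul]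
  have A4a : (1 - b * bd) * b = b - b ^ 2 * bd := by
    rw [sub_mul, one_mul, mul_assoc, ← h2, ← mul_assoc, ← pow_two]
  have A4 : a * b = (b - b ^ 2 * bd) * a := by
    rw [h, A4a, mul_sub, mul_one, mul_assoc (b - b ^ 2 * bd) a (b * bd), A2, mul_zero, sub_zero]
  have h6 : a * (b ^ 2 * bd) = 0 := by
    rw [pow_two, ← mul_assoc, ← mul_assoc, mul_assoc (a * b) b bd, A4,
      mul_assoc (b - b ^ 2 * bd) a (b * bd), A2, mul_zero]
  have A5 : a * (b - b ^ 2 * bd) = (b - b ^ 2 * bd) * a := by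
    rw [mul_sub, h6, sub_zero, A4]
  have haC : Commute a (b - b ^ 2 * bd) := A5
  have h7 : bd * (b ^ 2 * bd) = bd * b := by
    rw [pow_two, ← mul_assoc, ← mul_assoc, ← h2, mul_assoc b bd b, mul_assoc b (bd * b) bd, h1]
  have A6 : bd * (b - b ^ 2 * bd) = 0 := by rw [mul_sub, h7, sub_self]
  have h8 : b ^ 2 * bd * bd = b * bd := by
    rw [pow_two, mul_assoc (b * b) bd bd, mul_assoc b b (bd * bd), ← mul_assoc b bd bd, A1]
  have A7 : (b - b ^ 2 * bd) * bd = 0 := by rw [sub_mul, h8, sub_self]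
  have hP2 : b * bd * (b * bd) = b * bd := by
    rw [mul_assoc b bd (b * bd), ← mul_assoc bd b bd, h1]
  have hb2e : b ^ 2 * bd = b * (b * bd) := by rw [pow_two, mul_assoc]
  have hCp : (b - b ^ 2 * bd) * (b * bd) = 0 := by
    rw [sub_mul, hb2e, mul_assoc b (b * bd) (b * bd), hP2, sub_self]
  have hPb2 : b * bd * (b ^ 2 * bd) = b ^ 2 * bd := by
    rw [hb2e, ← mul_assoc (b * bd) b (b * bd), mul_assoc b bd b, ← h2,
      mul_assoc b (b * bd) (b * bd), hP2]
  have A8 : ∀ n : ℕ, b * bd * bd ^ (n + 1) = bd ^ (n + 1) := fun n => by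
    rw [pow_succ', ← mul_assoc, A1]
  have A9 : ∀ n : ℕ, b * bd ^ (n + 1 + 1) = bd ^ (n + 1) := fun n => by
    rw [pow_succ' bd (n + 1), ← mul_assoc]; exact A8 n
  have hbdpow : ∀ n : ℕ, a * bd ^ (n + 1) = 0 := fun n => by
    rw [pow_succ', ← mul_assoc, A3, zero_mul]
  have hpowC : ∀ n : ℕ, bd ^ (n + 1) * (b - b ^ 2 * bd) = 0 := fun n => by
    rw [pow_succ, mul_assoc, A6, mul_zero]
  have hCpow : ∀ n : ℕ, (b - b ^ 2 * bd) * bd ^ (n + 1) = 0 := fun n => by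
    rw [pow_succ' bd n, ← mul_assoc, A7, zero_mul]
  have A11 : ∀ n : ℕ, a ^ (n + 1) * b = (b - b ^ 2 * bd) * a ^ (n + 1) := by
    intro n
    induction n with
    | zero => simpa using A4
    | succ k ih =>
      rw [pow_succ' a (k + 1), mul_assoc, ih, ← mul_assoc, A5, mul_assoc]
  have hanC : ∀ n : ℕ, a ^ n * (b - b ^ 2 * bd) = (b - b ^ 2 * bd) * a ^ n := fun n =>
    (haC.pow_left n).eq
  -- summability
  have hF : Summable (fun n : ℕ => bd ^ (n + 1) * a ^ n) := by
    have hr : (0:ℝ) < ‖bd‖ + 1 := by positivity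
    have hδ : (0:ℝ) < 1 / (2 * (‖bd‖ + 1)) := by positivity
    obtain ⟨M, hM1, HM⟩ := qn_exists_bound a ha hδ
    have hM0 : (0:ℝ) < M := lt_of_lt_of_le one_pos hM1
    have hhalf : (‖bd‖ + 1) * (1 / (2 * (‖bd‖ + 1))) = 1 / 2 := by field_simp
    refine Summable.of_norm_bounded (g := fun n => ((‖bd‖ + 1) * M) * (1/2) ^ n)
      ((summable_geometric_of_lt_one (by norm_num) (by norm_num)).mul_left _) fun n => ?_
    calc ‖bd ^ (n + 1) * a ^ n‖ ≤ ‖bd ^ (n + 1)‖ * ‖a ^ n‖ := norm_mul_le _ _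
      _ ≤ ‖bd‖ ^ (n + 1) * (M * (1 / (2 * (‖bd‖ + 1))) ^ n) :=
          mul_le_mul (norm_pow_le' bd n.succ_pos) (HM n) (norm_nonneg _) (by positivity)
      _ ≤ (‖bd‖ + 1) ^ (n + 1) * (M * (1 / (2 * (‖bd‖ + 1))) ^ n) :=
          mul_le_mul_of_nonneg_right
            (pow_le_pow_left₀ (norm_nonneg bd) (by linarith) (n + 1)) (by positivity)
      _ = ((‖bd‖ + 1) * M) * (((‖bd‖ + 1) * (1 / (2 * (‖bd‖ + 1)))) ^ n) := by
          rw [mul_pow]; ring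
      _ = ((‖bd‖ + 1) * M) * (1/2) ^ n := by rw [hhalf]
  set x : 𝒜 := ∑' n : ℕ, bd ^ (n + 1) * a ^ n with hxdef
  -- tsum computations
  have T1 : a * x = 0 := by
    rw [hxdef, ← hF.tsum_mul_left a]
    have hz : ∀ n : ℕ, a * (bd ^ (n + 1) * a ^ n) = 0 := fun n => by
      rw [← mul_assoc a (bd ^ (n + 1)) (a ^ n), hbdpow n, zero_mul]
    simp only [hz, tsum_zero]
  have T2 : x * b = bd * b := by
    rw [hxdef, ← hF.tsum_mul_right b]
    refine (tsum_eq_single 0 ?_).trans (by simp)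
    intro n hn
    obtain ⟨k, rfl⟩ := Nat.exists_eq_succ_of_ne_zero hn
    rw [mul_assoc, A11 k, ← mul_assoc, hpowC (k + 1), zero_mul]
  have hxa : x * a = ∑' n : ℕ, bd ^ (n + 1) * a ^ (n + 1) := by
    rw [hxdef, ← hF.tsum_mul_right a]
    exact tsum_congr fun n => by rw [mul_assoc, ← pow_succ]
  have T3 : b * x = b * bd + x * a := by
    rw [hxdef, ← hF.tsum_mul_left b, Summable.tsum_eq_zero_add (hF.mul_left b)]
    congr 1
    · simp
    · rw [hxa]
      exact tsum_congr fun k => by rw [← mul_assoc, A9 k]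
  have T4 : b * bd * x = x := by
    rw [hxdef, ← hF.tsum_mul_left (b * bd)]
    exact tsum_congr fun n => by rw [← mul_assoc, A8 n]
  have T6 : (b - b ^ 2 * bd) * x = 0 := by
    rw [hxdef, ← hF.tsum_mul_left (b - b ^ 2 * bd)]
    have hz : ∀ n : ℕ, (b - b ^ 2 * bd) * (bd ^ (n + 1) * a ^ n) = 0 := fun n => by
      rw [← mul_assoc, hCpow n, zero_mul]
    simp only [hz, tsum_zero]
  -- the two main identities
  have habx : (a + b) * x = b * bd + x * a := by rw [add_mul, T1, zero_add, T3]
  have hxab : x * (a + b) = b * bd + x * a := by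
    rw [mul_add, T2, ← h2, add_comm]
  have cond2 : (a + b) * x = x * (a + b) := habx.trans hxab.symm
  have cond1 : x * (a + b) * x = x := by
    rw [hxab, add_mul, mul_assoc x a x, T1, mul_zero, add_zero, T4]
  -- the quasinilpotent part
  have heE : (a + b) ^ 2 * x = (a + b) * (b * bd + x * a) := by
    rw [pow_two, mul_assoc, habx]
  have t1 : a * (x * a) = 0 := by rw [← mul_assoc, T1, zero_mul]
  have t2 : (b - b ^ 2 * bd) * (x * a) = 0 := by rw [← mul_assoc, T6, zero_mul]
  have W2 : (a + (b - b ^ 2 * bd)) * (b * bd + x * a) = 0 := by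
    rw [add_mul, mul_add, mul_add, A2, t1, hCp, t2]
    simp
  have W3 : (a + (b - b ^ 2 * bd)) * (1 - (b * bd + x * a)) = a + (b - b ^ 2 * bd) := by
    rw [mul_sub, mul_one, W2, sub_zero]
  have he2 : (b * bd + x * a) * (a + b) = (a + b) * (b * bd + x * a) := by
    rw [← habx, mul_assoc, ← cond2]
  have hEb2 : (b * bd + x * a) * (b ^ 2 * bd) = b ^ 2 * bd := by
    rw [add_mul, hPb2, mul_assoc x a (b ^ 2 * bd), h6, mul_zero, add_zero]
  have W1 : (a + b) - (a + b) ^ 2 * x = (1 - (b * bd + x * a)) * (a + (b - b ^ 2 * bd)) := by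
    have hadd : a + (b - b ^ 2 * bd) = (a + b) - b ^ 2 * bd := by abel
    have expand : (b * bd + x * a) * (a + (b - b ^ 2 * bd)) =
        (a + b) * (b * bd + x * a) - b ^ 2 * bd := by
      rw [hadd, mul_sub, he2, hEb2]
    rw [heE, sub_mul, one_mul, expand]
    abel
  have W3' : ∀ n : ℕ, (a + (b - b ^ 2 * bd)) ^ (n + 1) * (1 - (b * bd + x * a)) =
      (a + (b - b ^ 2 * bd)) ^ (n + 1) := fun n => by
    rw [pow_succ, mul_assoc, W3]
  have W4 : ∀ n : ℕ, ((a + b) - (a + b) ^ 2 * x) ^ (n + 1) =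
      (1 - (b * bd + x * a)) * (a + (b - b ^ 2 * bd)) ^ (n + 1) := by
    intro n
    induction n with
    | zero => rw [pow_one, pow_one, W1]
    | succ k ih =>
      rw [pow_succ, ih, W1, mul_assoc (1 - (b * bd + x * a)) ((a + (b - b ^ 2 * bd)) ^ (k + 1))
        ((1 - (b * bd + x * a)) * (a + (b - b ^ 2 * bd))),
        ← mul_assoc ((a + (b - b ^ 2 * bd)) ^ (k + 1)) (1 - (b * bd + x * a))
        (a + (b - b ^ 2 * bd)), W3' k, ← pow_succ]
  have W5 : IsQuasinilpotent (a + (b - b ^ 2 * bd)) := qn_add_of_commute haC ha h3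
  have cond3 : IsQuasinilpotent ((a + b) - (a + b) ^ 2 * x) := by
    refine qn_of_norm_le ‖(1 - (b * bd + x * a))‖ (norm_nonneg _) W5 fun n => ?_
    rw [W4 n]
    exact norm_mul_le _ _
  exact ⟨cond1, cond2, cond3⟩
end

section
/- Let a ∈ 𝒜 be quasinilpotent and let b ∈ 𝒜 be generalized Drazin invertible with generalized Drazin inverse b^d. If a b = b a, then a + b is generalized Drazin invertible and (a+b)^d = Σ_{n=0}^∞ (b^d)^{n+1} (−a)^n. -/
open Filter Topology
open scoped ENNReal NNReal

set_option linter.unusedSectionVars false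

variable {𝒜 : Type*} [NormedRing 𝒜] [NormedAlgebra ℂ 𝒜] [CompleteSpace 𝒜]

/-- Auxiliary growth predicate equivalent to quasinilpotency. -/
def QN (x : 𝒜) : Prop := ∀ ε : ℝ, 0 < ε → ∃ M : ℝ, 0 < M ∧ ∀ n : ℕ, ‖x ^ n‖ ≤ M * ε ^ n

lemma IsQuasinilpotent.qn {x : 𝒜} (h : IsQuasinilpotent x) : QN x := by
  intro ε hε
  have hg := spectrum.pow_nnnorm_pow_one_div_tendsto_nhds_spectralRadius x
  rw [h] at hg
  rw [ENNReal.tendsto_nhds_zero] at hg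
  have hev := hg (ENNReal.ofReal ε) (by simpa using hε)
  rw [eventually_atTop] at hev
  obtain ⟨N, hN⟩ := hev
  set N' := max N 1 with hN'
  have key : ∀ n, N' ≤ n → ‖x ^ n‖ ≤ ε ^ n := by
    intro n hn
    have hn1 : 1 ≤ n := le_trans (le_max_right N 1) hn
    have h1 := hN n (le_trans (le_max_left N 1) hn)
    have h2 : ((‖x ^ n‖₊ : ℝ≥0∞) ^ (1 / (n:ℝ))) ^ (n:ℝ) ≤ (ENNReal.ofReal ε) ^ (n:ℝ) :=
      ENNReal.rpow_le_rpow h1 (by positivity)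
    rw [← ENNReal.rpow_mul, one_div,
      inv_mul_cancel₀ (Nat.cast_ne_zero.mpr (by omega) : (n:ℝ) ≠ 0),
      ENNReal.rpow_one, ENNReal.rpow_natCast, ← ENNReal.ofReal_pow hε.le] at h2
    have := ENNReal.toReal_mono (by simp) h2
    rw [ENNReal.toReal_ofReal (by positivity)] at this
    simpa [ENNReal.coe_toReal] using this
  refine ⟨(∑ k ∈ Finset.range N', ‖x ^ k‖ / ε ^ k) + 1, by positivity, fun n => ?_⟩
  rcases lt_or_ge n N' with hlt | hge
  · have h1 : ‖x ^ n‖ / ε ^ n ≤ ∑ k ∈ Finset.range N', ‖x ^ k‖ / ε ^ k :=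
      Finset.single_le_sum (f := fun k => ‖x ^ k‖ / ε ^ k) (fun k _ => by positivity)
        (Finset.mem_range.mpr hlt)
    have h2 : ‖x ^ n‖ = (‖x ^ n‖ / ε ^ n) * ε ^ n := by field_simp
    rw [h2]
    exact mul_le_mul_of_nonneg_right (h1.trans (by linarith)) (by positivity)
  · calc ‖x ^ n‖ ≤ ε ^ n := key n hge
      _ ≤ _ := le_mul_of_one_le_left (by positivity) (by
        have : (0:ℝ) ≤ ∑ k ∈ Finset.range N', ‖x ^ k‖ / ε ^ k :=
          Finset.sum_nonneg fun k _ => by positivity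
        linarith)

lemma QN.isQuasinilpotent {x : 𝒜} (h : QN x) : IsQuasinilpotent x := by
  refine le_antisymm ?_ zero_le
  have key : ∀ ε : ℝ, 0 < ε → spectralRadius ℂ x ≤ ENNReal.ofReal ε := by
    intro ε hε
    obtain ⟨M, hM, hMb⟩ := h (ε / 2) (by positivity)
    refine le_of_tendsto (spectrum.pow_norm_pow_one_div_tendsto_nhds_spectralRadius x) ?_
    have h2 : ∀ᶠ n : ℕ in atTop, M ≤ 2 ^ n := by
      have := tendsto_pow_atTop_atTop_of_one_lt (r := (2:ℝ)) one_lt_two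
      exact this.eventually_ge_atTop M
    filter_upwards [h2, eventually_ge_atTop 1] with n hn hn1
    have hne : (n:ℝ) ≠ 0 := Nat.cast_ne_zero.mpr (by omega)
    have step1 : ‖x ^ n‖ ^ (1 / (n:ℝ)) ≤ (M * (ε/2) ^ n) ^ (1 / (n:ℝ)) :=
      Real.rpow_le_rpow (norm_nonneg _) (hMb n) (by positivity)
    have step2 : (M * (ε/2) ^ n) ^ (1 / (n:ℝ)) = M ^ (1/(n:ℝ)) * (ε/2) := by
      rw [Real.mul_rpow hM.le (by positivity), one_div,
        Real.pow_rpow_inv_natCast (by positivity) (by omega : n ≠ 0)]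
    have step3 : M ^ (1/(n:ℝ)) ≤ 2 := by
      calc M ^ (1/(n:ℝ)) ≤ ((2:ℝ) ^ n) ^ (1/(n:ℝ)) :=
            Real.rpow_le_rpow hM.le hn (by positivity)
        _ = 2 := by rw [one_div, Real.pow_rpow_inv_natCast (by norm_num) (by omega : n ≠ 0)]
    have : ‖x ^ n‖ ^ (1 / (n:ℝ)) ≤ ε := by
      calc ‖x ^ n‖ ^ (1 / (n:ℝ)) ≤ M ^ (1/(n:ℝ)) * (ε/2) := by rw [← step2]; exact step1
        _ ≤ 2 * (ε/2) := by
            apply mul_le_mul_of_nonneg_right step3 (by positivity)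
        _ = ε := by ring
    exact ENNReal.ofReal_le_ofReal this
  refine ENNReal.le_of_forall_pos_le_add fun ε hε _ => ?_
  simpa using (key ε (by exact_mod_cast hε)).trans (by simp)

lemma QN.mul_comm' {x y : 𝒜} (hx : QN x) (hxy : x * y = y * x) : QN (x * y) := by
  intro ε hε
  obtain ⟨M, hM, hMb⟩ := hx (ε / (‖y‖ + 1)) (by positivity)
  refine ⟨M, hM, fun n => ?_⟩
  have hc : Commute x y := hxy
  rcases Nat.eq_zero_or_pos n with rfl | hn
  · simpa using hMb 0
  rw [hc.mul_pow]
  calc ‖x ^ n * y ^ n‖ ≤ ‖x ^ n‖ * ‖y ^ n‖ := norm_mul_le _ _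
    _ ≤ (M * (ε / (‖y‖ + 1)) ^ n) * ‖y‖ ^ n := by
        apply mul_le_mul (hMb n) (norm_pow_le' _ hn) (by positivity) (by positivity)
    _ = M * ((ε / (‖y‖ + 1)) * ‖y‖) ^ n := by ring
    _ ≤ M * ε ^ n := by
        apply mul_le_mul_of_nonneg_left (pow_le_pow_left₀ (by positivity) ?_ n) hM.le
        rw [div_mul_eq_mul_div, div_le_iff₀ (by positivity)]
        nlinarith [norm_nonneg y]

lemma QN.add' {x y : 𝒜} (hx : QN x) (hy : QN y) (hxy : x * y = y * x) : QN (x + y) := by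
  intro ε hε
  obtain ⟨Mx, hMx, hMxb⟩ := hx (ε / 2) (by positivity)
  obtain ⟨My, hMy, hMyb⟩ := hy (ε / 2) (by positivity)
  refine ⟨Mx * My * (‖(1:𝒜)‖ + 1), by positivity, fun n => ?_⟩
  have hc : Commute x y := hxy
  rw [hc.add_pow]
  calc ‖∑ m ∈ Finset.range (n + 1), x ^ m * y ^ (n - m) * (n.choose m : 𝒜)‖
      ≤ ∑ m ∈ Finset.range (n + 1), ‖x ^ m * y ^ (n - m) * (n.choose m : 𝒜)‖ :=
        norm_sum_le _ _
    _ ≤ ∑ m ∈ Finset.range (n + 1),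
          (Mx * (ε/2) ^ m) * (My * (ε/2) ^ (n - m)) * ((n.choose m : ℝ) * (‖(1:𝒜)‖ + 1)) := by
        refine Finset.sum_le_sum fun m _ => ?_
        have h1 : ‖x ^ m * y ^ (n - m) * (n.choose m : 𝒜)‖
            ≤ ‖x ^ m‖ * ‖y ^ (n - m)‖ * ‖(n.choose m : 𝒜)‖ :=
          le_trans (norm_mul_le _ _) (by gcongr; exact norm_mul_le _ _)
        have h2 : ‖(n.choose m : 𝒜)‖ ≤ (n.choose m : ℝ) * (‖(1:𝒜)‖ + 1) := by
          have : ((n.choose m : ℕ) : 𝒜) = (n.choose m : ℕ) • (1:𝒜) := by simp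
          rw [this]
          calc ‖(n.choose m : ℕ) • (1:𝒜)‖ ≤ (n.choose m : ℝ) * ‖(1:𝒜)‖ := by
                simpa using (norm_nsmul_le : ‖(n.choose m : ℕ) • (1:𝒜)‖ ≤ _)
            _ ≤ (n.choose m : ℝ) * (‖(1:𝒜)‖ + 1) := by
                apply mul_le_mul_of_nonneg_left (by linarith) (by positivity)
        calc ‖x ^ m * y ^ (n - m) * (n.choose m : 𝒜)‖
            ≤ ‖x ^ m‖ * ‖y ^ (n - m)‖ * ‖(n.choose m : 𝒜)‖ := h1
          _ ≤ (Mx * (ε/2) ^ m) * (My * (ε/2) ^ (n - m)) * ((n.choose m : ℝ) * (‖(1:𝒜)‖ + 1)) :=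
              mul_le_mul (mul_le_mul (hMxb m) (hMyb (n - m)) (norm_nonneg _) (by positivity))
                h2 (norm_nonneg _) (by positivity)
    _ = Mx * My * (‖(1:𝒜)‖ + 1) * ∑ m ∈ Finset.range (n + 1),
          (ε/2) ^ m * (ε/2) ^ (n - m) * (n.choose m : ℝ) := by
        rw [Finset.mul_sum]; congr 1; ext m; ring
    _ = Mx * My * (‖(1:𝒜)‖ + 1) * ε ^ n := by
        rw [← Commute.add_pow (Commute.all (ε/2) (ε/2))]
        norm_num

lemma QN.op {x : 𝒜} (h : QN x) : QN (MulOpposite.op x) := by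
  intro ε hε
  obtain ⟨M, hM, hMb⟩ := h ε hε
  exact ⟨M, hM, fun n => by simpa [← MulOpposite.op_pow, MulOpposite.norm_op] using hMb n⟩

/-- e-half : `p * a * (1 - p) = 0`. -/
lemma half_comm (a b bd : 𝒜) (hbd : bd * b * bd = bd) (hcm : b * bd = bd * b)
    (hq : QN (b - b ^ 2 * bd)) (hab : a * b = b * a) :
    (b * bd) * a = (b * bd) * a * (b * bd) := by
  have c1 : bd * b = b * bd := hcm.symm
  have a1 : b * a = a * b := hab.symm
  -- p-facts
  have hpp : (b * bd) * (b * bd) = b * bd := by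
    rw [mul_assoc, ← mul_assoc bd b bd, hbd]
  have hpbd : (b * bd) * bd = bd := by rw [hcm, hbd]
  have hbdp : bd * (b * bd) = bd := by rw [← mul_assoc, hbd]
  have hpb : (b * bd) * b = b * (b * bd) := by
    rw [mul_assoc, c1, ← mul_assoc]
  set p := b * bd with hp
  set q := b - b * p with hqd
  have hq' : QN q := by
    have : b - b ^ 2 * bd = q := by rw [hqd, hp, pow_two, mul_assoc]
    rwa [this] at hq
  have hpq : p * q = 0 := by
    rw [hqd, mul_sub, ← mul_assoc, hpb, mul_assoc, hpp, sub_self]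
  have hbdbp : bd * (b * p) = p := by
    rw [← mul_assoc, c1, hpp]
  set e := p * a - p * a * p with he
  have E1 : bd * (e * q) = e := by
    have k1 : e * q = p * a * q := by
      rw [he, sub_mul, mul_assoc (p * a) p q, hpq, mul_zero, sub_zero]
    have habz : ∀ z : 𝒜, a * (b * z) = b * (a * z) := fun z => by
      rw [← mul_assoc, hab, mul_assoc]
    have hpbz : ∀ z : 𝒜, p * (b * z) = b * (p * z) := fun z => by
      rw [← mul_assoc, hpb, mul_assoc]
    have hppz : ∀ z : 𝒜, p * (p * z) = p * z := fun z => by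
      rw [← mul_assoc, hpp]
    have k2 : p * a * q = b * p * e := by
      rw [hqd, he]
      simp only [mul_sub, sub_mul, mul_assoc, hab, habz, hpb, hpbz, hpp, hppz]
    rw [k1, k2, ← mul_assoc, hbdbp, he]
    simp only [mul_sub, sub_mul, mul_assoc, hpp, hppz]
  have E2 : ∀ n : ℕ, e = bd ^ n * e * q ^ n := by
    intro n
    induction n with
    | zero => simp
    | succ n ih =>
      rw [pow_succ bd n, pow_succ' q n]
      calc e = bd ^ n * e * q ^ n := ih
        _ = bd ^ n * (bd * (e * q)) * q ^ n := by rw [E1]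
        _ = bd ^ n * bd * e * (q * q ^ n) := by noncomm_ring
  -- kill e
  have he0 : e = 0 := by
    set ε : ℝ := 1 / (2 * (‖bd‖ + 1)) with hε
    obtain ⟨M, hM, hMb⟩ := hq' ε (by positivity)
    have hbound : ∀ n : ℕ, ‖e‖ ≤ ‖e‖ * M * (1/2) ^ (n+1) := by
      intro n
      have h1 : ‖e‖ ≤ ‖bd‖ ^ (n+1) * ‖e‖ * ‖q ^ (n+1)‖ := by
        calc ‖e‖ = ‖bd ^ (n+1) * e * q ^ (n+1)‖ := by rw [← E2 (n+1)]
          _ ≤ ‖bd ^ (n+1) * e‖ * ‖q ^ (n+1)‖ := norm_mul_le _ _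
          _ ≤ ‖bd ^ (n+1)‖ * ‖e‖ * ‖q ^ (n+1)‖ := by
              apply mul_le_mul_of_nonneg_right (norm_mul_le _ _) (norm_nonneg _)
          _ ≤ ‖bd‖ ^ (n+1) * ‖e‖ * ‖q ^ (n+1)‖ := by
              apply mul_le_mul_of_nonneg_right
                (mul_le_mul_of_nonneg_right (norm_pow_le' bd n.succ_pos) (norm_nonneg _))
                (norm_nonneg _)
      calc ‖e‖ ≤ ‖bd‖ ^ (n+1) * ‖e‖ * ‖q ^ (n+1)‖ := h1
        _ ≤ ‖bd‖ ^ (n+1) * ‖e‖ * (M * ε ^ (n+1)) := by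
            apply mul_le_mul_of_nonneg_left (hMb (n+1)) (by positivity)
        _ = ‖e‖ * M * (‖bd‖ * ε) ^ (n+1) := by ring
        _ ≤ ‖e‖ * M * (1/2) ^ (n+1) := by
            apply mul_le_mul_of_nonneg_left (pow_le_pow_left₀ (by positivity) ?_ _)
              (by positivity)
            rw [hε]
            rw [mul_one_div, div_le_div_iff₀ (by positivity) (by norm_num)]
            nlinarith [norm_nonneg bd]
    have hlim : Tendsto (fun n : ℕ => ‖e‖ * M * (1/2) ^ (n+1)) atTop (𝓝 0) := by
      have h2 : Tendsto (fun n : ℕ => (1/2 : ℝ) ^ (n+1)) atTop (𝓝 0) :=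
        (tendsto_pow_atTop_nhds_zero_of_lt_one (by norm_num) (by norm_num)).comp
          (tendsto_add_atTop_nat 1)
      simpa using h2.const_mul (‖e‖ * M)
    have : ‖e‖ ≤ 0 := ge_of_tendsto' hlim hbound
    exact norm_le_zero_iff.mp this
  rw [he] at he0
  exact sub_eq_zero.mp he0

lemma comm_bd (a b bd : 𝒜) (hbd : bd * b * bd = bd) (hcm : b * bd = bd * b)
    (hq : QN (b - b ^ 2 * bd)) (hab : a * b = b * a) : a * bd = bd * a := by
  have c1 : bd * b = b * bd := hcm.symm
  have c2 : ∀ z : 𝒜, bd * (b * z) = b * (bd * z) := fun z => by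
    rw [← mul_assoc, c1, mul_assoc]
  have r1 : b * (bd * bd) = bd := by rw [← mul_assoc, hcm, hbd]
  have r2 : ∀ z : 𝒜, b * (bd * (bd * z)) = bd * z := fun z => by
    rw [← mul_assoc, ← mul_assoc, mul_assoc b bd bd, r1]
  have h1 : (b * bd) * a = (b * bd) * a * (b * bd) := half_comm a b bd hbd hcm hq hab
  -- opposite-algebra version gives the other half
  have h2 : a * (b * bd) = (b * bd) * a * (b * bd) := by
    have hbd_op : MulOpposite.op bd * MulOpposite.op b * MulOpposite.op bd =
        MulOpposite.op bd := by
      simp only [← MulOpposite.op_mul]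
      rw [← mul_assoc, hbd]
    have hcm_op : MulOpposite.op b * MulOpposite.op bd =
        MulOpposite.op bd * MulOpposite.op b := by
      simp only [← MulOpposite.op_mul]; rw [hcm]
    have hq_op : QN (MulOpposite.op b - (MulOpposite.op b) ^ 2 * MulOpposite.op bd) := by
      have : MulOpposite.op b - (MulOpposite.op b) ^ 2 * MulOpposite.op bd =
          MulOpposite.op (b - b ^ 2 * bd) := by
        simp only [← MulOpposite.op_pow, ← MulOpposite.op_mul, ← MulOpposite.op_sub]
        congr 1
        rw [pow_two, c2, c1, ← mul_assoc]
      rw [this]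
      exact hq.op
    have hab_op : MulOpposite.op a * MulOpposite.op b =
        MulOpposite.op b * MulOpposite.op a := by
      simp only [← MulOpposite.op_mul]; rw [hab]
    have h2' := half_comm (MulOpposite.op a) (MulOpposite.op b) (MulOpposite.op bd)
      hbd_op hcm_op hq_op hab_op
    simp only [← MulOpposite.op_mul] at h2'
    have h2'' := MulOpposite.op_injective h2'
    -- h2'' : a * (bd * b) = bd * b * (a * (bd * b))
    rw [c1] at h2''
    rw [h2'', ← mul_assoc]
  have haP : a * (b * bd) = (b * bd) * a := by rw [h2, ← h1]
  -- invertibility dance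
  set P := b * bd with hPdef
  set u := b * P + 1 - P with hu
  set w := bd + 1 - P with hwd
  have huw : u * w = 1 := by
    rw [hu, hwd, hPdef]
    simp only [mul_sub, sub_mul, mul_add, add_mul, one_mul, mul_one, mul_assoc, c1, c2, r1, r2]
    abel
  have hwu : w * u = 1 := by
    rw [hu, hwd, hPdef]
    simp only [mul_sub, sub_mul, mul_add, add_mul, one_mul, mul_one, mul_assoc, c1, c2, r1, r2]
    abel
  have habP : a * (b * P) = (b * P) * a := by
    rw [← mul_assoc, hab, mul_assoc, haP, ← mul_assoc]
  have hau : a * u = u * a := by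
    rw [hu]
    simp only [mul_add, add_mul, mul_sub, sub_mul, mul_one, one_mul, habP, haP]
  have haw : a * w = w * a := by
    calc a * w = (w * u) * (a * w) := by rw [hwu, one_mul]
      _ = w * ((u * a) * w) := by simp only [mul_assoc]
      _ = w * ((a * u) * w) := by rw [hau]
      _ = w * (a * (u * w)) := by simp only [mul_assoc]
      _ = w * a := by rw [huw, mul_one]
  have hbd_eq : bd = w - 1 + P := by rw [hwd]; abel
  rw [hbd_eq]
  simp only [mul_sub, sub_mul, mul_add, add_mul, mul_one, one_mul, haw, haP]

/-- Corollary 2.2. -/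
theorem stmt10 (a b bd : 𝒜) (ha : IsQuasinilpotent a) (hb : IsGDrazinInverse b bd)
    (hab : a * b = b * a) :
    IsGDrazinInverse (a + b) (∑' n : ℕ, bd ^ (n + 1) * (-a) ^ n) := by
  obtain ⟨hb1, hb2, hb3⟩ := hb
  have habd : a * bd = bd * a := comm_bd a b bd hb1 hb2 hb3.qn hab
  have hQa : QN a := ha.qn
  have hQq : QN (b - b ^ 2 * bd) := hb3.qn
  set c : 𝒜 := bd * -a with hc
  have hQc : QN c := by
    have h1 : QN (a * bd) := hQa.mul_comm' habd
    have h2 : QN (bd * a) := by rwa [habd] at h1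
    intro ε hε
    obtain ⟨M, hM, hMb⟩ := h2 ε hε
    refine ⟨M, hM, fun n => ?_⟩
    have hcn : c ^ n = (-1 : 𝒜) ^ n * (bd * a) ^ n := by
      rw [hc, mul_neg, ← neg_one_mul, (Commute.neg_one_left (bd * a)).mul_pow]
    rw [hcn]
    rcases Nat.even_or_odd n with he | ho
    · rw [he.neg_one_pow, one_mul]; exact hMb n
    · rw [ho.neg_one_pow, neg_one_mul, norm_neg]; exact hMb n
  obtain ⟨M, hM, hMb⟩ := hQc (1/2) (by norm_num)
  have hsum : Summable (fun n : ℕ => c ^ n) :=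
    Summable.of_norm_bounded (g := fun n => M * (1/2) ^ n)
      ((summable_geometric_of_lt_one (by norm_num) (by norm_num)).mul_left M) hMb
  have key : ∃ t : 𝒜, (∑' n : ℕ, c ^ n) = t ∧ t = 1 + t * c ∧ t = 1 + c * t := by
    refine ⟨∑' n : ℕ, c ^ n, rfl, ?_, ?_⟩
    · conv_lhs => rw [Summable.tsum_eq_zero_add hsum]
      rw [pow_zero]
      congr 1
      rw [tsum_congr (fun n => pow_succ c n), hsum.tsum_mul_right]
    · conv_lhs => rw [Summable.tsum_eq_zero_add hsum]
      rw [pow_zero]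
      congr 1
      rw [tsum_congr (fun n => pow_succ' c n), hsum.tsum_mul_left]
  obtain ⟨t, htdef, hshift1, hshift2⟩ := key
  have htK : t * (1 + bd * a) = 1 := by
    have h1 : t * (1 + bd * a) = t - t * c := by
      rw [hc]; noncomm_ring
    rw [h1]
    nth_rewrite 1 [hshift1]
    exact add_sub_cancel_right 1 (t * c)
  have hKt : (1 + bd * a) * t = 1 := by
    have h1 : (1 + bd * a) * t = t - c * t := by
      rw [hc]; noncomm_ring
    rw [h1]
    nth_rewrite 1 [hshift2]
    exact add_sub_cancel_right 1 (c * t)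
  -- commutation of c with a, b, bd
  have hca0 : a * (bd * a) = (bd * a) * a := by
    rw [← mul_assoc, habd]
  have hcb0 : b * (bd * a) = (bd * a) * b := by
    rw [← mul_assoc, hb2, mul_assoc, ← hab, ← mul_assoc]
  have hcbd0 : bd * (bd * a) = (bd * a) * bd := by
    rw [mul_assoc, ← habd]
  have hca : a * c = c * a := by
    rw [hc, mul_neg, mul_neg, neg_mul, hca0]
  have hcb : b * c = c * b := by
    rw [hc, mul_neg, mul_neg, neg_mul, hcb0]
  have hcbd : bd * c = c * bd := by
    rw [hc, mul_neg, mul_neg, neg_mul, hcbd0]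
  have hct : ∀ x : 𝒜, x * c = c * x → t * x = x * t := by
    intro x hx
    have hxC : Commute x c := hx
    rw [← htdef, ← hsum.tsum_mul_right, ← hsum.tsum_mul_left]
    exact tsum_congr fun n => ((hxC.pow_right n).eq).symm
  -- sorting rules
  have w1 : b * a = a * b := hab.symm
  have w2 : bd * a = a * bd := habd.symm
  have w3 : bd * b = b * bd := hb2.symm
  have w4 : t * a = a * t := hct a hca
  have w5 : t * b = b * t := hct b hcb
  have w6 : t * bd = bd * t := hct bd hcbd
  have swz : ∀ x y : 𝒜, y * x = x * y → ∀ z : 𝒜, y * (x * z) = x * (y * z) :=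
    fun x y h z => by rw [← mul_assoc, h, mul_assoc]
  have w1' := swz a b w1
  have w2' := swz a bd w2
  have w3' := swz b bd w3
  have w4' := swz a t w4
  have w5' := swz b t w5
  have w6' := swz bd t w6
  -- rewrite the tsum
  have hst : (∑' n : ℕ, bd ^ (n + 1) * (-a) ^ n) = bd * t := by
    have hcomm : Commute bd (-a) := Commute.neg_right (habd.symm : Commute bd a)
    refine (tsum_congr fun n => ?_).trans (by rw [hsum.tsum_mul_left, htdef])
    rw [hc, hcomm.mul_pow, ← mul_assoc, ← pow_succ']
  rw [hst]
  refine ⟨?_, ?_, ?_⟩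
  · -- (bd*t) * (a+b) * (bd*t) = bd*t
    calc (bd * t) * (a + b) * (bd * t)
        = (bd * a * bd) * (t * t) + (bd * b * bd) * (t * t) := by
          simp only [mul_add, add_mul, mul_assoc, w1, w1', w2, w2', w3, w3', w4, w4', w5, w5',
            w6, w6']
      _ = bd * ((1 + bd * a) * t) * t := by
          rw [hb1]
          simp only [mul_add, add_mul, mul_one, one_mul, mul_assoc, w1, w1', w2, w2', w3, w3',
            w4, w4', w5, w5', w6, w6']
          abel
      _ = bd * t := by rw [hKt, mul_one]
  · simp only [mul_add, add_mul, mul_assoc, w1, w1', w2, w2', w3, w3', w4, w4', w5, w5',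
      w6, w6']
  · have hr : (a + b) - (a + b) ^ 2 * (bd * t) = ((a + b) * (1 - b * bd)) * t := by
      nth_rewrite 1 [show (a + b) = (a + b) * ((1 + bd * a) * t) from by rw [hKt, mul_one]]
      simp only [pow_two, sub_mul, mul_sub, mul_add, add_mul, mul_one, one_mul, mul_assoc,
        w1, w1', w2, w2', w3, w3', w4, w4', w5, w5', w6, w6']
      abel
    rw [hr]
    have hq0 : QN ((a + b) * (1 - b * bd)) := by
      have hz : (a + b) * (1 - b * bd) = a * (1 - b * bd) + (b - b ^ 2 * bd) := by
        simp only [pow_two, sub_mul, mul_sub, mul_add, add_mul, mul_one, one_mul, mul_assoc,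
          w1, w1', w2, w2', w3, w3', w4, w4', w5, w5', w6, w6']
        abel
      rw [hz]
      refine QN.add' ?_ hQq ?_
      · refine hQa.mul_comm' ?_
        simp only [mul_sub, sub_mul, mul_one, one_mul, mul_assoc, w1, w1', w2, w2', w3, w3']
      · simp only [pow_two, mul_sub, sub_mul, mul_one, one_mul, mul_assoc,
          w1, w1', w2, w2', w3, w3']
    refine (hq0.mul_comm' ?_).isQuasinilpotent
    simp only [mul_sub, sub_mul, mul_add, add_mul, mul_one, one_mul, mul_assoc,
      w1, w1', w2, w2', w3, w3', w4, w4', w5, w5', w6, w6']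
end

section
/- Let a, b ∈ 𝒜 be generalized Drazin invertible with generalized Drazin inverses a^d, b^d and spectral idempotent a^π = 1 − a a^d. If b a^π = 0, then the following are equivalent: (i) a + b is generalized Drazin invertible; (ii) c = a a^d (a+b) is generalized Drazin invertible; (iii) a^2 a^d + b is generalized Drazin invertible. -/
set_option linter.unusedSectionVars false
set_option maxHeartbeats 1000000

open Filter

variable {𝒜 : Type*} [NormedRing 𝒜] [NormedAlgebra ℂ 𝒜] [CompleteSpace 𝒜]

section Auxiliary

lemma isUnit_left_of_mul_isUnit {M : Type*} [Monoid M] {A B : M}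
    (h : IsUnit (A * B)) (hB : IsUnit B) : IsUnit A := by
  obtain ⟨u, hu⟩ := hB
  rw [← hu] at h
  have hA : A = A * ↑u * ↑u⁻¹ := by rw [mul_assoc, Units.mul_inv, mul_one]
  rw [hA]
  exact h.mul u⁻¹.isUnit

lemma isUnit_right_of_mul_isUnit {M : Type*} [Monoid M] {A B : M}
    (h : IsUnit (A * B)) (hA : IsUnit A) : IsUnit B := by
  obtain ⟨u, hu⟩ := hA
  rw [← hu] at h
  have hB : B = ↑u⁻¹ * (↑u * B) := by rw [← mul_assoc, Units.inv_mul, one_mul]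
  rw [hB]
  exact u⁻¹.isUnit.mul h

lemma isUnit_one_sub_swap {R : Type*} [Ring R] {A B : R}
    (h : IsUnit (1 - A * B)) : IsUnit (1 - B * A) := by
  obtain ⟨u, hu⟩ := h
  obtain ⟨v, hv1, hv2⟩ : ∃ v : R, (1 - A * B) * v = 1 ∧ v * (1 - A * B) = 1 :=
    ⟨↑u⁻¹, by rw [← hu, Units.mul_inv], by rw [← hu, Units.inv_mul]⟩
  have k1 : v - A * B * v = 1 := by rw [← hv1]; noncomm_ring
  have k2 : v - v * (A * B) = 1 := by rw [← hv2]; noncomm_ring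
  refine ⟨⟨1 - B * A, 1 + B * v * A, ?_, ?_⟩, rfl⟩
  · have expand : (1 - B * A) * (1 + B * v * A) = 1 - B * A + B * (v - A * B * v) * A := by
      noncomm_ring
    rw [expand, k1]; noncomm_ring
  · have expand : (1 + B * v * A) * (1 - B * A) = 1 - B * A + B * (v - v * (A * B)) * A := by
      noncomm_ring
    rw [expand, k2]; noncomm_ring

lemma isQuasinilpotent_iff_isUnit {v : 𝒜} :
    IsQuasinilpotent v ↔ ∀ l : ℂ, l ≠ 0 → IsUnit (algebraMap ℂ 𝒜 l - v) := by
  constructor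
  · intro hv l hl
    by_contra hcon
    have hmem : l ∈ spectrum ℂ v := spectrum.mem_iff.mpr hcon
    have hle : (‖l‖₊ : ENNReal) ≤ spectralRadius ℂ v :=
      le_iSup₂ (f := fun k (_ : k ∈ spectrum ℂ v) => (‖k‖₊ : ENNReal)) l hmem
    rw [hv] at hle
    simp only [nonpos_iff_eq_zero, ENNReal.coe_eq_zero, nnnorm_eq_zero] at hle
    exact hl hle
  · intro hv
    refine le_antisymm ?_ zero_le
    refine iSup₂_le fun k hk => ?_
    rcases eq_or_ne k 0 with rfl | hk0
    · simp
    · exact absurd (hv k hk0) (spectrum.mem_iff.mp hk)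

lemma IsQuasinilpotent.zero : IsQuasinilpotent (0 : 𝒜) := spectrum.spectralRadius_zero

lemma key_identity {u w : 𝒜} (huw : u * w = 0) (l : ℂ) :
    (algebraMap ℂ 𝒜 l - u) * (algebraMap ℂ 𝒜 l - w)
      = algebraMap ℂ 𝒜 l * (algebraMap ℂ 𝒜 l - (u + w)) := by
  have hc : u * algebraMap ℂ 𝒜 l = algebraMap ℂ 𝒜 l * u := (Algebra.commutes l u).symm
  have e1 : (algebraMap ℂ 𝒜 l - u) * (algebraMap ℂ 𝒜 l - w)
      = algebraMap ℂ 𝒜 l * algebraMap ℂ 𝒜 l - algebraMap ℂ 𝒜 l * w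
        - u * algebraMap ℂ 𝒜 l + u * w := by noncomm_ring
  rw [e1, huw, hc]
  noncomm_ring

lemma IsQuasinilpotent.add_of_mul_eq_zero {u w : 𝒜} (hu : IsQuasinilpotent u)
    (hw : IsQuasinilpotent w) (huw : u * w = 0) : IsQuasinilpotent (u + w) := by
  rw [isQuasinilpotent_iff_isUnit] at hu hw ⊢
  intro l hl
  have hL : IsUnit (algebraMap ℂ 𝒜 l) := (isUnit_iff_ne_zero.mpr hl).map (algebraMap ℂ 𝒜)
  have hprod : IsUnit (algebraMap ℂ 𝒜 l * (algebraMap ℂ 𝒜 l - (u + w))) := by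
    rw [← key_identity huw l]
    exact (hu l hl).mul (hw l hl)
  exact isUnit_right_of_mul_isUnit hprod hL

lemma IsQuasinilpotent.left_of_add {u w : 𝒜} (huw0 : IsQuasinilpotent (u + w))
    (hw : IsQuasinilpotent w) (huw : u * w = 0) : IsQuasinilpotent u := by
  rw [isQuasinilpotent_iff_isUnit] at huw0 hw ⊢
  intro l hl
  have hL : IsUnit (algebraMap ℂ 𝒜 l) := (isUnit_iff_ne_zero.mpr hl).map (algebraMap ℂ 𝒜)
  have hprod : IsUnit ((algebraMap ℂ 𝒜 l - u) * (algebraMap ℂ 𝒜 l - w)) := by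
    rw [key_identity huw l]
    exact hL.mul (huw0 l hl)
  exact isUnit_left_of_mul_isUnit hprod (hw l hl)

/-- If `t * q = q` and `q` is quasinilpotent then `q * t` is quasinilpotent. -/
lemma IsQuasinilpotent.mul_of_absorb {q t : 𝒜} (hq : IsQuasinilpotent q)
    (htq : t * q = q) : IsQuasinilpotent (q * t) := by
  rw [isQuasinilpotent_iff_isUnit] at hq ⊢
  intro l hl
  have hL : IsUnit (algebraMap ℂ 𝒜 l) := (isUnit_iff_ne_zero.mpr hl).map (algebraMap ℂ 𝒜)
  have hLi : IsUnit (algebraMap ℂ 𝒜 l⁻¹) :=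
    (isUnit_iff_ne_zero.mpr (inv_ne_zero hl)).map (algebraMap ℂ 𝒜)
  have h1 : IsUnit (1 - algebraMap ℂ 𝒜 l⁻¹ * q) := by
    have : 1 - algebraMap ℂ 𝒜 l⁻¹ * q = algebraMap ℂ 𝒜 l⁻¹ * (algebraMap ℂ 𝒜 l - q) := by
      rw [mul_sub, ← map_mul, inv_mul_cancel₀ hl, map_one]
    rw [this]
    exact hLi.mul (hq l hl)
  have h2 : IsUnit (1 - (algebraMap ℂ 𝒜 l⁻¹ * q) * t) := by
    apply isUnit_one_sub_swap (A := t) (B := algebraMap ℂ 𝒜 l⁻¹ * q)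
    have : t * (algebraMap ℂ 𝒜 l⁻¹ * q) = algebraMap ℂ 𝒜 l⁻¹ * q := by
      rw [← mul_assoc, ← Algebra.commutes l⁻¹ t, mul_assoc, htq]
    rw [this]
    exact h1
  have h3 : algebraMap ℂ 𝒜 l - q * t
      = algebraMap ℂ 𝒜 l * (1 - (algebraMap ℂ 𝒜 l⁻¹ * q) * t) := by
    rw [mul_sub, mul_one, ← mul_assoc, ← mul_assoc, ← map_mul, mul_inv_cancel₀ hl, map_one,
      one_mul]
  rw [h3]
  exact hL.mul h2

/-- An element with square zero is quasinilpotent. -/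
lemma IsQuasinilpotent.of_sq_eq_zero {m : 𝒜} (hm : m * m = 0) : IsQuasinilpotent m := by
  rw [isQuasinilpotent_iff_isUnit]
  intro l hl
  set L := algebraMap ℂ 𝒜 l with hLdef
  set W := algebraMap ℂ 𝒜 ((l * l)⁻¹) with hWdef
  have hLL : L * L = algebraMap ℂ 𝒜 (l * l) := (map_mul _ _ _).symm
  have hWL : W * (L * L) = 1 := by
    rw [hLL, ← map_mul, inv_mul_cancel₀ (mul_ne_zero hl hl), map_one]
  have hLW : (L * L) * W = 1 := by
    rw [hLL, ← map_mul, mul_inv_cancel₀ (mul_ne_zero hl hl), map_one]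
  have hWm : W * m = m * W := Algebra.commutes _ m
  have hprod : (L - m) * (L + m) = L * L := by
    have hc : m * L = L * m := (Algebra.commutes l m).symm
    have : (L - m) * (L + m) = L * L + L * m - m * L - m * m := by noncomm_ring
    rw [this, hm, hc]
    noncomm_ring
  have hprod2 : (L + m) * (L - m) = L * L := by
    have hc : m * L = L * m := (Algebra.commutes l m).symm
    have : (L + m) * (L - m) = L * L - L * m + m * L - m * m := by noncomm_ring
    rw [this, hm, hc]
    noncomm_ring
  refine ⟨⟨L - m, (L + m) * W, ?_, ?_⟩, rfl⟩
  · rw [← mul_assoc, hprod, hLW]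
  · calc (L + m) * W * (L - m) = W * ((L + m) * (L - m)) := by
          have : (L + m) * W = W * (L + m) := by
            rw [mul_add, add_mul, hWm, Algebra.commutes l ((algebraMap ℂ 𝒜) (l * l)⁻¹)]
          rw [this, mul_assoc]
      _ = 1 := by rw [hprod2, hWL]

/-- powers of a quasinilpotent element are eventually bounded by any geometric sequence -/
lemma IsQuasinilpotent.pow_small {q : 𝒜} (hq : IsQuasinilpotent q) {ε : ℝ} (hε : 0 < ε) :
    ∀ᶠ n : ℕ in atTop, ‖q ^ n‖ ≤ ε ^ n := by
  have h := spectrum.pow_nnnorm_pow_one_div_tendsto_nhds_spectralRadius q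
  rw [hq] at h
  have hev := h.eventually_lt_const (ENNReal.ofReal_pos.mpr hε)
  filter_upwards [hev, eventually_ge_atTop 1] with n hn hn1
  have hn0 : (n : ℝ) ≠ 0 := Nat.cast_ne_zero.mpr (by omega)
  have h2 : ((‖q ^ n‖₊ : ENNReal) ^ (1 / (n : ℝ))) ^ (n : ℝ)
      ≤ (ENNReal.ofReal ε) ^ (n : ℝ) :=
    ENNReal.rpow_le_rpow hn.le (by positivity)
  rw [← ENNReal.rpow_mul, one_div_mul_cancel hn0, ENNReal.rpow_one,
    ENNReal.rpow_natCast, ← ENNReal.ofReal_pow hε.le, ← ENNReal.ofReal_coe_nnreal, coe_nnnorm] at h2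
  exact (ENNReal.ofReal_le_ofReal_iff (by positivity)).mp h2

/-- If `‖v‖ ≤ C^n * ‖q^n‖` for all `n ≥ 1` with `q` quasinilpotent, then `v = 0`. -/
lemma eq_zero_of_le_pow_mul {v q : 𝒜} (hq : IsQuasinilpotent q) (C : ℝ) (hC : 0 ≤ C)
    (hb : ∀ n : ℕ, 1 ≤ n → ‖v‖ ≤ C ^ n * ‖q ^ n‖) : v = 0 := by
  have hε : (0:ℝ) < (2 * (C + 1))⁻¹ := by positivity
  have hhalf : C * (2 * (C + 1))⁻¹ ≤ 1 / 2 := by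
    rw [mul_inv_le_iff₀ (by positivity)]
    nlinarith
  have hev : ∀ᶠ n : ℕ in atTop, ‖v‖ ≤ (1/2 : ℝ) ^ n := by
    filter_upwards [hq.pow_small hε, eventually_ge_atTop 1] with n hn hn1
    calc ‖v‖ ≤ C ^ n * ‖q ^ n‖ := hb n hn1
      _ ≤ C ^ n * ((2 * (C + 1))⁻¹) ^ n := mul_le_mul_of_nonneg_left hn (by positivity)
      _ = (C * (2 * (C + 1))⁻¹) ^ n := (mul_pow _ _ _).symm
      _ ≤ (1/2 : ℝ) ^ n := pow_le_pow_left₀ (by positivity) hhalf n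
  have htend : Tendsto (fun n : ℕ => (1/2 : ℝ) ^ n) atTop (nhds 0) :=
    tendsto_pow_atTop_nhds_zero_of_lt_one (by norm_num) (by norm_num)
  have : ‖v‖ ≤ 0 := ge_of_tendsto htend hev
  simpa using le_antisymm this (norm_nonneg v)

/-- geometric-type summability -/
lemma summable_pow_mul_pow {q : 𝒜} (hq : IsQuasinilpotent q) (d : 𝒜) :
    Summable (fun n : ℕ => q ^ n * d ^ (n + 1)) := by
  have hε : (0:ℝ) < (2 * (‖d‖ + 1))⁻¹ := by positivity
  have hhalf : (2 * (‖d‖ + 1))⁻¹ * ‖d‖ ≤ 1 / 2 := by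
    rw [inv_mul_le_iff₀ (by positivity)]
    nlinarith [norm_nonneg d]
  apply Summable.of_norm_bounded_eventually_nat (g := fun n => ‖d‖ * (1/2 : ℝ) ^ n)
  · exact (summable_geometric_of_lt_one (by norm_num) (by norm_num)).mul_left _
  · filter_upwards [hq.pow_small hε, eventually_ge_atTop 1] with n hn hn1
    calc ‖q ^ n * d ^ (n + 1)‖ ≤ ‖q ^ n‖ * ‖d ^ (n + 1)‖ := norm_mul_le _ _
      _ ≤ ((2 * (‖d‖ + 1))⁻¹) ^ n * ‖d‖ ^ (n + 1) :=
          mul_le_mul hn (norm_pow_le' d (by omega)) (norm_nonneg _) (by positivity)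
      _ = ((2 * (‖d‖ + 1))⁻¹ * ‖d‖) ^ n * ‖d‖ := by ring
      _ ≤ (1/2 : ℝ) ^ n * ‖d‖ := by
          apply mul_le_mul_of_nonneg_right _ (norm_nonneg d)
          exact pow_le_pow_left₀ (by positivity) hhalf n
      _ = ‖d‖ * (1/2 : ℝ) ^ n := mul_comm _ _

end Auxiliary

/-- Forward lemma: if `x` is gDrazin invertible, `q` quasinilpotent, `x * q = 0`,
then `x + q` is gDrazin invertible. -/
lemma forward_lemma {x q d : 𝒜} (hd : IsGDrazinInverse x d) (hq : IsQuasinilpotent q)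
    (hxq : x * q = 0) : IsGDrazinInvertible (x + q) := by
  obtain ⟨hdxd, hcomm, hquasi⟩ := hd
  have hxq1 : ∀ n : ℕ, x * q ^ (n + 1) = 0 := fun n => by
    rw [pow_succ', ← mul_assoc, hxq, zero_mul]
  have h1 : x * (d * q) = 0 := by rw [← mul_assoc, hcomm, mul_assoc, hxq, mul_zero]
  have hdq : d * q = 0 := by
    conv_lhs => rw [← hdxd]
    rw [mul_assoc, mul_assoc, h1, mul_zero]
  have hdq1 : ∀ n : ℕ, d ^ (n + 1) * q = 0 := fun n => by
    rw [pow_succ, mul_assoc, hdq, mul_zero]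
  have hxdd : x * d * d = d := by rw [hcomm, hdxd]
  have hdp : ∀ n : ℕ, d ^ (n + 1) * (x * d) = d ^ (n + 1) := fun n => by
    rw [pow_succ, mul_assoc, ← mul_assoc d x d, hdxd, ← pow_succ]
  set f : ℕ → 𝒜 := fun n => q ^ n * d ^ (n + 1) with hf
  have hsum : Summable f := summable_pow_mul_pow hq d
  set s := ∑' n, f n with hs
  set g : ℕ → 𝒜 := fun n => q ^ (n + 1) * d ^ (n + 1) with hg
  have hqf : ∀ n, q * f n = g n := fun n => by
    show q * (q ^ n * d ^ (n + 1)) = q ^ (n + 1) * d ^ (n + 1)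
    rw [← mul_assoc, ← pow_succ']
  have hsumg : Summable g := (hsum.mul_left q).congr hqf
  set S1 := ∑' n, g n with hS1
  set P' := x * d + S1 with hP'
  have hf0 : f 0 = d := by simp [hf]
  have hxs : x * s = x * d := by
    rw [hs, ← hsum.tsum_mul_left x, tsum_eq_single 0 ?_]
    · simp [hf]
    · intro n hn
      obtain ⟨m, rfl⟩ := Nat.exists_eq_succ_of_ne_zero hn
      show x * (q ^ (m + 1) * d ^ (m + 2)) = 0
      rw [← mul_assoc, hxq1, zero_mul]
  have hqs : q * s = S1 := by
    rw [hs, ← hsum.tsum_mul_left q, hS1]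
    exact tsum_congr hqf
  have hsq : s * q = 0 := by
    rw [hs, ← hsum.tsum_mul_right q]
    have : ∀ n, f n * q = 0 := fun n => by
      show q ^ n * d ^ (n + 1) * q = 0
      rw [mul_assoc, hdq1, mul_zero]
    rw [tsum_congr this, tsum_zero]
  have hsx : s * x = P' := by
    rw [hs, ← hsum.tsum_mul_right x]
    have hterm : ∀ n, f n * x = q ^ n * d ^ n * (x * d) := fun n => by
      show q ^ n * d ^ (n + 1) * x = q ^ n * d ^ n * (x * d)
      simp only [pow_succ, mul_assoc]
      rw [hcomm]
    set hfun : ℕ → 𝒜 := fun n => q ^ n * d ^ n * (x * d) with hhfun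
    have hsumh : Summable hfun := (hsum.mul_right x).congr hterm
    rw [tsum_congr hterm, hsumh.tsum_eq_zero_add]
    have h0 : hfun 0 = x * d := by simp [hhfun]
    have hsucc : ∀ n, hfun (n + 1) = g n := fun n => by
      show q ^ (n + 1) * d ^ (n + 1) * (x * d) = q ^ (n + 1) * d ^ (n + 1)
      rw [mul_assoc, hdp n]
    rw [h0, tsum_congr hsucc, hP', hS1]
  have hys : (x + q) * s = P' := by rw [add_mul, hxs, hqs, hP']
  have hsy : s * (x + q) = P' := by rw [mul_add, hsx, hsq, add_zero]
  have hds : d * s = d * d := by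
    rw [hs, ← hsum.tsum_mul_left d, tsum_eq_single 0 ?_]
    · simp [hf]
    · intro n hn
      obtain ⟨m, rfl⟩ := Nat.exists_eq_succ_of_ne_zero hn
      show d * (q ^ (m + 1) * d ^ (m + 2)) = 0
      simp only [pow_succ', ← mul_assoc, hdq, zero_mul]
  have hT : s = d + ∑' n, f (n + 1) := by
    rw [hs]
    conv_lhs => rw [hsum.tsum_eq_zero_add]
    rw [hf0]
  have hds2 : ∀ k : ℕ, d ^ (k + 1) * s = d ^ (k + 1) * d := fun k => by
    rw [pow_succ d k, mul_assoc, hds, ← mul_assoc]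
  have hS1s : S1 * s = s - d := by
    rw [hS1, ← hsumg.tsum_mul_right s]
    have hterm : ∀ n, g n * s = f (n + 1) := fun n => by
      show q ^ (n + 1) * d ^ (n + 1) * s = q ^ (n + 1) * d ^ (n + 1 + 1)
      rw [mul_assoc, hds2 n, ← pow_succ]
    rw [tsum_congr hterm, eq_sub_iff_add_eq, add_comm, ← hT]
  have hP's : P' * s = s := by
    have hxds : x * d * s = d := by rw [mul_assoc, hds, ← mul_assoc, hxdd]
    rw [hP', add_mul, hxds, hS1s]
    abel
  have ax1 : s * (x + q) * s = s := by rw [hsy, hP's]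
  have ax2 : (x + q) * s = s * (x + q) := by rw [hys, hsy]
  have hxS1 : x * S1 = 0 := by
    rw [hS1, ← hsumg.tsum_mul_left x]
    have : ∀ n, x * g n = 0 := fun n => by
      show x * (q ^ (n + 1) * d ^ (n + 1)) = 0
      rw [← mul_assoc, hxq1, zero_mul]
    rw [tsum_congr this, tsum_zero]
  have hxP' : x * P' = x ^ 2 * d := by
    rw [hP', mul_add, hxS1, add_zero, ← mul_assoc, ← pow_two]
  have hP'q : P' * q = 0 := by
    have hS1q : S1 * q = 0 := by
      rw [hS1, ← hsumg.tsum_mul_right q]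
      have : ∀ n, g n * q = 0 := fun n => by
        show q ^ (n + 1) * d ^ (n + 1) * q = 0
        rw [mul_assoc, hdq1, mul_zero]
      rw [tsum_congr this, tsum_zero]
    rw [hP', add_mul, hS1q, add_zero, mul_assoc, hdq, mul_zero]
  have htq : (1 - P') * q = q := by rw [sub_mul, one_mul, hP'q, sub_zero]
  have hw : q - q * P' = q * (1 - P') := by rw [mul_one_sub]
  have hwq : IsQuasinilpotent (q - q * P') := by
    rw [hw]; exact hq.mul_of_absorb htq
  have huq : (x - x ^ 2 * d) * q = 0 := by
    rw [sub_mul, hxq, mul_assoc, hdq, mul_zero, sub_zero]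
  have huw : (x - x ^ 2 * d) * (q - q * P') = 0 := by
    rw [hw, ← mul_assoc, huq, zero_mul]
  have hsum3 : IsQuasinilpotent ((x - x ^ 2 * d) + (q - q * P')) :=
    hquasi.add_of_mul_eq_zero hwq huw
  have hfinal : (x + q) - (x + q) ^ 2 * s = (x - x ^ 2 * d) + (q - q * P') := by
    rw [pow_two, mul_assoc, hys, add_mul, hxP']
    abel
  exact ⟨s, ax1, ax2, by rw [hfinal]; exact hsum3⟩

/-- Backward lemma: if `x + q` is gDrazin invertible, `q` quasinilpotent, `x * q = 0`,
then `x` is gDrazin invertible. -/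
lemma backward_lemma {x q e : 𝒜} (he : IsGDrazinInverse (x + q) e) (hq : IsQuasinilpotent q)
    (hxq : x * q = 0) : IsGDrazinInvertible x := by
  obtain ⟨heye, hcomm, hz⟩ := he
  set y := x + q with hy
  have hyq : y * q = q * q := by rw [hy, add_mul, hxq, zero_add]
  have hykq : ∀ k : ℕ, y ^ k * q = q ^ (k + 1) := by
    intro k
    induction k with
    | zero => simp
    | succ n ih => rw [pow_succ, mul_assoc, hyq, ← mul_assoc, ih, ← pow_succ]
  have he2 : e * e * y = e := by rw [mul_assoc, ← hcomm, ← mul_assoc, heye]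
  have heky : ∀ k : ℕ, e ^ (k + 1) * y ^ k = e := by
    intro k
    induction k with
    | zero => simp
    | succ n ih =>
      calc e ^ (n + 1 + 1) * y ^ (n + 1) = e ^ n * (e * e * y) * y ^ n := by
            rw [pow_succ e (n + 1), pow_succ e n, pow_succ' y n]
            simp only [mul_assoc]
        _ = e ^ (n + 1) * y ^ n := by rw [he2, ← pow_succ]
        _ = e := ih
  have heq : e * q = 0 := by
    apply eq_zero_of_le_pow_mul hq ‖e‖ (norm_nonneg e)
    intro n hn
    obtain ⟨m, rfl⟩ := Nat.exists_eq_succ_of_ne_zero (by omega : n ≠ 0)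
    have hstep : e * q = e ^ (m + 1) * q ^ (m + 1) := by
      calc e * q = e ^ (m + 1) * y ^ m * q := by rw [heky m]
        _ = e ^ (m + 1) * q ^ (m + 1) := by rw [mul_assoc, hykq m]
    rw [hstep]
    calc ‖e ^ (m + 1) * q ^ (m + 1)‖ ≤ ‖e ^ (m + 1)‖ * ‖q ^ (m + 1)‖ := norm_mul_le _ _
      _ ≤ ‖e‖ ^ (m + 1) * ‖q ^ (m + 1)‖ :=
          mul_le_mul_of_nonneg_right (norm_pow_le' e (by omega)) (norm_nonneg _)
  have hPe : y * e * e = e := by rw [hcomm, heye]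
  have heP : e * (y * e) = e := by rw [← mul_assoc, heye]
  have hPP : y * e * (y * e) = y * e := by rw [mul_assoc, heP]
  have hPq : y * e * q = 0 := by rw [mul_assoc, heq, mul_zero]
  have hey' : e * y = e * x + e * q := by rw [hy, mul_add]
  have hex' : e * x = e * y := by rw [hey', heq, add_zero]
  set w := e - q * (e * e) with hwdef
  set x1 := x * (y * e) with hx1def
  have hex1 : e * x1 = y * e := by
    rw [hx1def, ← mul_assoc, hex', ← hcomm, hPP]
  have hwx1 : w * x1 = y * e - q * e := by
    rw [hwdef, sub_mul]
    have h2 : q * (e * e) * x1 = q * e := by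
      rw [mul_assoc, mul_assoc, hex1, heP]
    rw [hex1, h2]
  have hx1e : x1 * e = y * e - q * e := by
    rw [hx1def, mul_assoc, hPe, hy, add_mul]
    abel
  have hx1q : x1 * q = 0 := by rw [hx1def, mul_assoc, hPq, mul_zero]
  have hx1w : x1 * w = y * e - q * e := by
    rw [hwdef, mul_sub, hx1e, ← mul_assoc, hx1q, zero_mul, sub_zero]
  have hax2 : x1 * w = w * x1 := by rw [hx1w, hwx1]
  have t1 : y * e * w = e := by
    rw [hwdef, mul_sub, hPe, ← mul_assoc, hPq, zero_mul, sub_zero]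
  have t2 : q * e * w = q * (e * e) := by
    rw [hwdef, mul_sub, mul_assoc]
    have h3 : q * e * (q * (e * e)) = 0 := by
      rw [mul_assoc, ← mul_assoc e q, heq, zero_mul, mul_zero]
    rw [h3, sub_zero]
  have hax1 : w * x1 * w = w := by
    rw [hwx1, sub_mul, t1, t2, hwdef]
  have hx1P : x1 * (y * e) = x1 := by
    rw [hx1def, mul_assoc, hPP]
  have hresid : x1 - x1 ^ 2 * w = 0 := by
    have h4 : x1 ^ 2 * w = x1 := by
      rw [pow_two, mul_assoc, hx1w, mul_sub, hx1P, ← mul_assoc, hx1q, zero_mul, sub_zero]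
    rw [h4, sub_self]
  have hgd1 : IsGDrazinInverse x1 w :=
    ⟨hax1, hax2, by rw [hresid]; exact IsQuasinilpotent.zero⟩
  have hPx : y * e * x = y * (e * y) := by rw [mul_assoc, hex']
  have hEyye : e * y * (y * e) = e * y := by rw [← hcomm, hPP, hcomm]
  have hPxP : y * e * x * (y * e) = y * e * x := by
    rw [hPx, mul_assoc, hEyye]
  have hx1D : x1 * (x - x1) = 0 := by
    have h5 : x1 * x = x * (y * e * x) := by rw [hx1def, mul_assoc]
    have h6 : x1 * x1 = x * (y * e * x) := by
      rw [hx1def, mul_assoc, ← mul_assoc (y * e) x (y * e), hPxP]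
    rw [mul_sub, h5, h6, sub_self]
  have hQq : (1 - y * e) * q = q := by rw [sub_mul, one_mul, hPq, sub_zero]
  have hgq : IsQuasinilpotent (q - q * (y * e)) := by
    rw [← mul_one_sub]
    exact hq.mul_of_absorb hQq
  have hDg : (x - x1) * (q - q * (y * e)) = 0 := by
    have h7 : (x - x1) * q = 0 := by rw [sub_mul, hxq, hx1q, sub_self]
    rw [← mul_one_sub q (y * e), ← mul_assoc, h7, zero_mul]
  have hDgsum : (x - x1) + (q - q * (y * e)) = y - y ^ 2 * e := by
    rw [hx1def, hy, pow_two]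
    noncomm_ring
  have hDquasi : IsQuasinilpotent (x - x1) :=
    IsQuasinilpotent.left_of_add (by rw [hDgsum]; exact hz) hgq hDg
  have hxsum : x1 + (x - x1) = x := by abel
  have hres := forward_lemma hgd1 hDquasi hx1D
  rw [hxsum] at hres
  exact hres

/-- Corollary 2.3 (equivalences). -/
theorem stmt11 (a b ad bd : 𝒜) (ha : IsGDrazinInverse a ad) (hb : IsGDrazinInverse b bd)
    (h : b * (1 - a * ad) = 0) :
    (IsGDrazinInvertible (a + b) ↔ IsGDrazinInvertible (a * ad * (a + b))) ∧
    (IsGDrazinInvertible (a + b) ↔ IsGDrazinInvertible (a ^ 2 * ad + b)) := by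
  obtain ⟨hada, hacomm, han⟩ := ha
  have hbp : b * (a * ad) = b := by
    rw [mul_one_sub] at h
    exact (sub_eq_zero.mp h).symm
  -- basic identities
  have hp2 : (a * ad) * (a * ad) = a * ad := by
    rw [mul_assoc, ← mul_assoc ad a ad, hada]
  have hpa : (a * ad) * a = a * (a * ad) := by rw [mul_assoc, ← hacomm]
  have hadp : ad * (a * ad) = ad := by rw [← mul_assoc, hada]
  have e0 : a * ad * a = a ^ 2 * ad := by rw [hpa, ← mul_assoc, ← pow_two]
  -- x3 := a^2*ad + b,  n := a - a^2*ad
  have hx3pi : (a ^ 2 * ad + b) * (1 - a * ad) = 0 := by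
    rw [add_mul, h, add_zero, mul_one_sub]
    have u3 : a ^ 2 * ad * (a * ad) = a ^ 2 * ad := by rw [mul_assoc, hadp]
    rw [u3, sub_self]
  have hn_eq : a - a ^ 2 * ad = (1 - a * ad) * a := by rw [one_sub_mul, e0]
  have hx3n : (a ^ 2 * ad + b) * (a - a ^ 2 * ad) = 0 := by
    rw [hn_eq, ← mul_assoc, hx3pi, zero_mul]
  have hsum1 : (a ^ 2 * ad + b) + (a - a ^ 2 * ad) = a + b := by abel
  -- c := a*ad*(a+b),  m := (1 - a*ad)*b
  have hmm : ((1 - a * ad) * b) * ((1 - a * ad) * b) = 0 := by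
    rw [mul_assoc, ← mul_assoc b (1 - a * ad) b, h, zero_mul, mul_zero]
  have hm : IsQuasinilpotent ((1 - a * ad) * b) := IsQuasinilpotent.of_sq_eq_zero hmm
  have hap : (a + b) * (1 - a * ad) = a - a * (a * ad) := by
    rw [add_mul, h, add_zero, mul_one_sub]
  have hpap : a * ad * (a - a * (a * ad)) = 0 := by
    rw [mul_sub]
    have u2 : a * ad * (a * (a * ad)) = a * (a * ad) := by
      rw [← mul_assoc, hpa, mul_assoc, hp2]
    rw [hpa, u2, sub_self]
  have hcm : (a * ad * (a + b)) * ((1 - a * ad) * b) = 0 := by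
    calc (a * ad * (a + b)) * ((1 - a * ad) * b)
        = a * ad * ((a + b) * (1 - a * ad)) * b := by simp only [mul_assoc]
      _ = a * ad * (a - a * (a * ad)) * b := by rw [hap]
      _ = 0 := by rw [hpap, zero_mul]
  have hsum2 : a * ad * (a + b) + (1 - a * ad) * b = a ^ 2 * ad + b := by
    rw [← e0]
    noncomm_ring
  -- the two equivalences
  have hiff13 : IsGDrazinInvertible (a + b) ↔ IsGDrazinInvertible (a ^ 2 * ad + b) := by
    constructor
    · rintro ⟨e, he⟩
      refine backward_lemma (q := a - a ^ 2 * ad) (e := e) ?_ han hx3n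
      rw [hsum1]
      exact he
    · rintro ⟨d, hd⟩
      have := forward_lemma hd han hx3n
      rwa [hsum1] at this
  have hiff23 : IsGDrazinInvertible (a * ad * (a + b)) ↔ IsGDrazinInvertible (a ^ 2 * ad + b) := by
    constructor
    · rintro ⟨d, hd⟩
      have := forward_lemma hd hm hcm
      rwa [hsum2] at this
    · rintro ⟨e, he⟩
      refine backward_lemma (q := (1 - a * ad) * b) (e := e) ?_ hm hcm
      rw [hsum2]
      exact he
  exact ⟨hiff13.trans hiff23.symm, hiff13⟩
end

section
/- Let a, b ∈ 𝒜 be generalized Drazin invertible with generalized Drazin inverses a^d, b^d and spectral idempotent a^π = 1 − a a^d. Assume b a^π = 0, and assume c = a a^d (a+b) is generalized Drazin invertible with generalized Drazin inverse c^d. Then a + b is generalized Drazin invertible and (a+b)^d = c^d + Σ_{n=0}^∞ a^n a^π b (c^d)^{n+2}. -/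
open scoped ENNReal NNReal

variable {𝒜 : Type*} [NormedRing 𝒜] [NormedAlgebra ℂ 𝒜] [CompleteSpace 𝒜]

lemma qnil_isUnit {q : 𝒜} (hq : IsQuasinilpotent q) {lam : ℂ} (hl : lam ≠ 0) :
    IsUnit (algebraMap ℂ 𝒜 lam - q) := by
  by_contra hcon
  have hmem : lam ∈ spectrum ℂ q := spectrum.mem_iff.mpr hcon
  have : (‖lam‖₊ : ℝ≥0∞) ≤ spectralRadius ℂ q :=
    le_iSup₂ (f := fun k (_ : k ∈ spectrum ℂ q) => (‖k‖₊ : ℝ≥0∞)) lam hmem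
  rw [hq, le_zero_iff] at this
  simp only [ENNReal.coe_eq_zero, nnnorm_eq_zero] at this
  exact hl this

lemma qnil_of_spec {r : 𝒜} (hr : ∀ lam : ℂ, lam ≠ 0 → IsUnit (algebraMap ℂ 𝒜 lam - r)) :
    IsQuasinilpotent r := by
  rw [IsQuasinilpotent, spectralRadius, ← le_zero_iff]
  refine iSup₂_le fun k hk => ?_
  rcases eq_or_ne k 0 with rfl | hk0
  · simp
  · exact absurd hk (spectrum.notMem_iff.mpr (hr k hk0))

lemma qnil_pow_le {q : 𝒜} (hq : IsQuasinilpotent q) {ε : ℝ} (hε : 0 < ε) :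
    ∀ᶠ n in Filter.atTop, ‖q ^ n‖ ≤ ε ^ n := by
  have h := spectrum.pow_nnnorm_pow_one_div_tendsto_nhds_spectralRadius q
  rw [hq] at h
  have hev : ∀ᶠ n : ℕ in Filter.atTop,
      (‖q ^ n‖₊ : ℝ≥0∞) ^ (1 / (n:ℝ)) < (ε.toNNReal : ℝ≥0∞) := by
    refine h.eventually_lt_const ?_
    simpa using hε
  filter_upwards [hev, Filter.eventually_ge_atTop 1] with n hn hn1
  have hn0 : (n : ℝ) ≠ 0 := by positivity
  have h2 : ((‖q ^ n‖₊ : ℝ≥0∞) ^ (1 / (n:ℝ))) ^ (n : ℝ) ≤ ((ε.toNNReal : ℝ≥0∞)) ^ (n : ℝ) :=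
    ENNReal.rpow_le_rpow hn.le (Nat.cast_nonneg n)
  rw [← ENNReal.rpow_mul, one_div, inv_mul_cancel₀ hn0, ENNReal.rpow_one,
    ENNReal.rpow_natCast, ← ENNReal.coe_pow, ENNReal.coe_le_coe] at h2
  calc ‖q ^ n‖ = ((‖q ^ n‖₊ : ℝ)) := rfl
    _ ≤ ((ε.toNNReal ^ n : ℝ≥0) : ℝ) := by exact_mod_cast h2
    _ = ε ^ n := by rw [NNReal.coe_pow, Real.coe_toNNReal _ hε.le]

/-- Corollary 2.3 (formula). -/
theorem stmt12 (a b ad bd c cd : 𝒜) (ha : IsGDrazinInverse a ad) (hb : IsGDrazinInverse b bd)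
    (h : b * (1 - a * ad) = 0)
    (hc : c = a * ad * (a + b)) (hcd : IsGDrazinInverse c cd) :
    IsGDrazinInverse (a + b)
      (cd + ∑' n : ℕ, a ^ n * (1 - a * ad) * b * cd ^ (n + 2)) := by
  obtain ⟨ha1, ha2, ha3⟩ := ha
  obtain ⟨hc1, hc2, hc3⟩ := hcd
  clear hb
  obtain ⟨p, hp_def⟩ : ∃ p : 𝒜, p = a * ad := ⟨_, rfl⟩
  rw [← hp_def] at h hc ⊢
  -- ******** basic algebraic facts ********
  have hpp : p * p = p := by
    rw [hp_def, mul_assoc, ← mul_assoc ad a ad, ha1]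
  have hap : a * p = p * a := by
    rw [hp_def, ha2, ← mul_assoc, ha2]
  have hbp : b * p = b := by
    rw [mul_sub, mul_one, sub_eq_zero] at h; exact h.symm
  have hcsum : c = p * a + p * b := by rw [hc, mul_add]
  have hpc : p * c = c := by
    rw [hcsum, mul_add, ← mul_assoc p p a, hpp, ← mul_assoc p p b, hpp]
  have hcp : c * p = c := by
    rw [hcsum, add_mul, mul_assoc p a p, hap, mul_assoc p b p, hbp, ← mul_assoc p p a, hpp]
  have hpcd : p * cd = cd := by
    have e1 : cd = c * (cd * cd) := by
      conv_lhs => rw [← hc1]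
      rw [← hc2, mul_assoc]
    conv_lhs => rw [e1]
    conv_rhs => rw [e1]
    rw [← mul_assoc, hpc]
  have hcdp : cd * p = cd := by
    have e1 : cd = (cd * cd) * c := by
      conv_lhs => rw [← hc1]
      rw [mul_assoc, hc2, ← mul_assoc]
    conv_lhs => rw [e1]
    conv_rhs => rw [e1]
    rw [mul_assoc, hcp]
  -- movement / absorption simp lemmas (right-assoc normal form)
  have hap' : ∀ x : 𝒜, a * (p * x) = p * (a * x) := fun x => by
    rw [← mul_assoc, hap, mul_assoc]
  have hpan : ∀ n : ℕ, a ^ n * p = p * a ^ n := fun n =>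
    ((show Commute p a from hap.symm).pow_right n).eq.symm
  have hapn' : ∀ (n : ℕ) (x : 𝒜), a ^ n * (p * x) = p * (a ^ n * x) := fun n x => by
    rw [← mul_assoc, hpan, mul_assoc]
  have hbp' : ∀ x : 𝒜, b * (p * x) = b * x := fun x => by rw [← mul_assoc, hbp]
  have hpp' : ∀ x : 𝒜, p * (p * x) = p * x := fun x => by rw [← mul_assoc, hpp]
  have hcdp' : ∀ x : 𝒜, cd * (p * x) = cd * x := fun x => by rw [← mul_assoc, hcdp]
  have hcp' : ∀ x : 𝒜, c * (p * x) = c * x := fun x => by rw [← mul_assoc, hcp]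
  have hpcd' : ∀ x : 𝒜, p * (cd * x) = cd * x := fun x => by rw [← mul_assoc, hpcd]
  have hpc' : ∀ x : 𝒜, p * (c * x) = c * x := fun x => by rw [← mul_assoc, hpc]
  have hcdkp : ∀ k : ℕ, cd ^ (k + 1) * p = cd ^ (k + 1) := fun k => by
    rw [pow_succ, mul_assoc, hcdp]
  have hcdkp' : ∀ (k : ℕ) (x : 𝒜), cd ^ (k + 1) * (p * x) = cd ^ (k + 1) * x := fun k x => by
    rw [← mul_assoc, hcdkp]
  -- kill lemmas
  have killb : ∀ (n : ℕ) (y : 𝒜), b * (a ^ n * ((1 - p) * y)) = 0 := by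
    intro n y
    simp only [sub_mul, mul_sub, one_mul, hapn', hbp', sub_self]
  have killcd : ∀ (n : ℕ) (y : 𝒜), cd * (a ^ n * ((1 - p) * y)) = 0 := by
    intro n y
    simp only [sub_mul, mul_sub, one_mul, hapn', hcdp', sub_self]
  have killc : ∀ (n : ℕ) (y : 𝒜), c * (a ^ n * ((1 - p) * y)) = 0 := by
    intro n y
    simp only [sub_mul, mul_sub, one_mul, hapn', hcp', sub_self]
  have killp : ∀ (n : ℕ) (y : 𝒜), p * (a ^ n * ((1 - p) * y)) = 0 := by
    intro n y
    simp only [sub_mul, mul_sub, one_mul, hapn', hpp', sub_self]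
  -- ******** summability ********
  have hqa3 : IsQuasinilpotent (a * (1 - p)) := by
    have e : a - a ^ 2 * ad = a * (1 - p) := by rw [hp_def]; noncomm_ring
    rwa [e] at ha3
  have hpi_idem : IsIdempotentElem ((1:𝒜) - p) := IsIdempotentElem.one_sub hpp
  have hcomm_api : a * (1 - p) = (1 - p) * a := by
    rw [mul_sub, sub_mul, mul_one, one_mul, hap]
  have haux : ∀ n : ℕ, a ^ n * (1 - p) = (a * (1 - p)) ^ n * (1 - p) := by
    intro n
    conv_rhs => rw [(show Commute a (1-p) from hcomm_api).mul_pow]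
    rw [mul_assoc, ← pow_succ, hpi_idem.pow_succ_eq]
  have hhalf : (2 * (‖cd‖ + 1))⁻¹ * ‖cd‖ ≤ 1 / 2 := by
    rw [inv_mul_le_iff₀ (by positivity)]
    nlinarith [norm_nonneg cd]
  have master : ∀ (y : 𝒜) (k : ℕ), Summable (fun n : ℕ => a ^ n * (1 - p) * y * cd ^ (n + k)) := by
    intro y k
    have hcdpos : (0:ℝ) < (2 * (‖cd‖ + 1))⁻¹ := by positivity
    have hev := qnil_pow_le hqa3 hcdpos
    apply Summable.of_norm_bounded_eventually_nat (g := fun n => ‖(1 - p) * y * cd ^ k‖ * (1 / 2) ^ n)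
    · exact (summable_geometric_of_lt_one (by norm_num) (by norm_num)).mul_left _
    · filter_upwards [hev, Filter.eventually_ge_atTop 1] with n hn hn1
      have e1 : a ^ n * (1 - p) * y * cd ^ (n + k)
          = (a * (1 - p)) ^ n * ((1 - p) * y * cd ^ k) * cd ^ n := by
        rw [haux n, Nat.add_comm n k, pow_add]
        simp only [mul_assoc]
      rw [e1]
      have h2 : ‖cd ^ n‖ ≤ ‖cd‖ ^ n := norm_pow_le' cd (by omega)
      calc ‖(a * (1 - p)) ^ n * ((1 - p) * y * cd ^ k) * cd ^ n‖
          ≤ ‖(a * (1 - p)) ^ n‖ * ‖(1 - p) * y * cd ^ k‖ * ‖cd‖ ^ n := by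
            refine (norm_mul_le _ _).trans ?_
            refine mul_le_mul (norm_mul_le _ _) h2 (norm_nonneg _) ?_
            positivity
        _ ≤ ((2 * (‖cd‖ + 1))⁻¹) ^ n * ‖(1 - p) * y * cd ^ k‖ * ‖cd‖ ^ n := by
            gcongr
        _ = ‖(1 - p) * y * cd ^ k‖ * ((2 * (‖cd‖ + 1))⁻¹ * ‖cd‖) ^ n := by ring
        _ ≤ ‖(1 - p) * y * cd ^ k‖ * (1 / 2) ^ n := by
            gcongr
  have hts : Summable (fun n : ℕ => a ^ n * (1 - p) * b * cd ^ (n + 2)) := master b 2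
  have hTs : Summable (fun n : ℕ => a ^ n * (1 - p) * b * cd ^ (n + 1)) := master b 1
  have hUs : Summable (fun n : ℕ => a ^ (n + 1) * (1 - p) * b * cd ^ (n + 1)) := by
    refine ((master b 1).mul_left a).congr fun n => ?_
    rw [pow_succ' a n]
    simp only [mul_assoc]
  -- extra kill lemma for powers of cd
  have killcdk : ∀ (k n : ℕ) (y : 𝒜), cd ^ (k + 1) * (a ^ n * ((1 - p) * y)) = 0 := by
    intro k n y
    rw [pow_succ, mul_assoc, killcd, mul_zero]
  -- pointwise facts about cd and c
  have hcdab : cd * (a + b) = cd * c := by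
    conv_lhs => rw [← hcdp]
    rw [mul_assoc, ← hc]
  have hcd2c : cd * (cd * c) = cd := by
    rw [← hc2, ← mul_assoc, hc1]
  have hcdnab : ∀ n : ℕ, cd ^ (n + 2) * (a + b) = cd ^ (n + 1) := by
    intro n
    rw [pow_add, pow_two, mul_assoc, mul_assoc, hcdab, hcd2c, ← pow_succ]
  have hccdcd : c * cd * cd = cd := by
    rw [hc2]; exact hc1
  -- ******** sum-level identities ********
  have hSx : (∑' n : ℕ, a ^ n * (1 - p) * b * cd ^ (n + 2)) * (a + b)
      = ∑' n : ℕ, a ^ n * (1 - p) * b * cd ^ (n + 1) := by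
    rw [← Summable.tsum_mul_right _ hts]
    exact tsum_congr fun n => by rw [mul_assoc, hcdnab n]
  have hxS : (a + b) * (∑' n : ℕ, a ^ n * (1 - p) * b * cd ^ (n + 2))
      = ∑' n : ℕ, a ^ (n + 1) * (1 - p) * b * cd ^ (n + 2) := by
    rw [← Summable.tsum_mul_left _ hts]
    refine tsum_congr fun n => ?_
    simp only [mul_assoc, add_mul, killb, add_zero]
    rw [← mul_assoc, ← pow_succ']
  have hT0 : (∑' n : ℕ, a ^ n * (1 - p) * b * cd ^ (n + 1))
      = (1 - p) * b * cd + ∑' n : ℕ, a ^ (n + 1) * (1 - p) * b * cd ^ (n + 2) := by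
    rw [Summable.tsum_eq_zero_add hTs]
    simp only [pow_zero, one_mul, zero_add, pow_one]
  have heS : (c * cd) * (∑' n : ℕ, a ^ n * (1 - p) * b * cd ^ (n + 2)) = 0 := by
    rw [← Summable.tsum_mul_left _ hts]
    rw [show (fun n : ℕ => (c * cd) * (a ^ n * (1 - p) * b * cd ^ (n + 2))) = fun n => (0:𝒜) from
      funext fun n => by simp only [mul_assoc, killcd, mul_zero]]
    exact tsum_zero
  have hTcd : (∑' n : ℕ, a ^ n * (1 - p) * b * cd ^ (n + 1)) * cd
      = ∑' n : ℕ, a ^ n * (1 - p) * b * cd ^ (n + 2) := by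
    rw [← Summable.tsum_mul_right _ hTs]
    exact tsum_congr fun n => by rw [mul_assoc, ← pow_succ]
  have hTS : (∑' n : ℕ, a ^ n * (1 - p) * b * cd ^ (n + 1))
      * (∑' n : ℕ, a ^ n * (1 - p) * b * cd ^ (n + 2)) = 0 := by
    rw [← Summable.tsum_mul_right _ hTs]
    rw [show (fun n : ℕ => (a ^ n * (1 - p) * b * cd ^ (n + 1))
        * (∑' m : ℕ, a ^ m * (1 - p) * b * cd ^ (m + 2))) = fun n => (0:𝒜) from
      funext fun n => ?_]
    · exact tsum_zero
    · rw [← Summable.tsum_mul_left _ hts]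
      rw [show (fun m : ℕ => (a ^ n * (1 - p) * b * cd ^ (n + 1))
          * (a ^ m * (1 - p) * b * cd ^ (m + 2))) = fun m => (0:𝒜) from
        funext fun m => by simp only [mul_assoc, killcdk, mul_zero]]
      exact tsum_zero
  have hxT : (a + b) * (∑' n : ℕ, a ^ n * (1 - p) * b * cd ^ (n + 1))
      = ∑' n : ℕ, a ^ (n + 1) * (1 - p) * b * cd ^ (n + 1) := by
    rw [← Summable.tsum_mul_left _ hTs]
    refine tsum_congr fun n => ?_
    simp only [mul_assoc, add_mul, killb, add_zero]
    rw [← mul_assoc, ← pow_succ']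
  have hpU : p * (∑' n : ℕ, a ^ (n + 1) * (1 - p) * b * cd ^ (n + 1)) = 0 := by
    rw [← Summable.tsum_mul_left _ hUs]
    rw [show (fun n : ℕ => p * (a ^ (n + 1) * (1 - p) * b * cd ^ (n + 1))) = fun n => (0:𝒜) from
      funext fun n => by simp only [mul_assoc, killp, mul_zero]]
    exact tsum_zero
  have hUp : (∑' n : ℕ, a ^ (n + 1) * (1 - p) * b * cd ^ (n + 1)) * p
      = ∑' n : ℕ, a ^ (n + 1) * (1 - p) * b * cd ^ (n + 1) := by
    rw [← Summable.tsum_mul_right _ hUs]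
    exact tsum_congr fun n => by rw [mul_assoc, hcdkp]
  -- ******** the two algebraic Drazin conditions ********
  have Fgen : ∀ y : 𝒜, p * y = y → (a + b) * y = c * y + (1 - p) * b * y := by
    intro y hy
    conv_lhs => rw [← hy]
    rw [← mul_assoc, add_mul a b p, hap, hbp, hcsum]
    noncomm_ring
  have hwx : (cd + ∑' n : ℕ, a ^ n * (1 - p) * b * cd ^ (n + 2)) * (a + b)
      = c * cd + ∑' n : ℕ, a ^ n * (1 - p) * b * cd ^ (n + 1) := by
    rw [add_mul, hSx, hcdab, ← hc2]
  have hxw : (a + b) * (cd + ∑' n : ℕ, a ^ n * (1 - p) * b * cd ^ (n + 2))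
      = c * cd + ∑' n : ℕ, a ^ n * (1 - p) * b * cd ^ (n + 1) := by
    rw [mul_add, hxS, Fgen cd hpcd, hT0, add_assoc]
  refine ⟨?_, hxw.trans hwx.symm, ?_⟩
  · rw [hwx, add_mul, mul_add, mul_add, hccdcd, heS, hTcd, hTS, add_zero, add_zero]
  -- ******** the quasinilpotency condition ********
  have hppi' : ∀ y : 𝒜, p * ((1 - p) * y) = 0 := fun y => by
    rw [← mul_assoc, mul_sub, mul_one, hpp, sub_self, zero_mul]
  have hx2w : (a + b) ^ 2 * (cd + ∑' n : ℕ, a ^ n * (1 - p) * b * cd ^ (n + 2))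
      = (c * (c * cd) + (1 - p) * (b * (c * cd)))
        + ∑' n : ℕ, a ^ (n + 1) * (1 - p) * b * cd ^ (n + 1) := by
    rw [pow_two, mul_assoc, hxw, mul_add, hxT, Fgen (c * cd) (hpc' cd)]
    rw [mul_assoc ((1:𝒜) - p) b (c * cd)]
  have habsplit : a + b = c + (a * (1 - p) + (1 - p) * b) := by
    rw [hcsum, mul_sub, sub_mul, mul_one, one_mul, hap]
    abel
  have hr : (a + b) - (a + b) ^ 2 * (cd + ∑' n : ℕ, a ^ n * (1 - p) * b * cd ^ (n + 2))
      = (c - c * (c * cd)) + a * (1 - p)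
        + ((1 - p) * b - (1 - p) * (b * (c * cd))
            - ∑' n : ℕ, a ^ (n + 1) * (1 - p) * b * cd ^ (n + 1)) := by
    rw [hx2w]
    conv_lhs => rw [habsplit]
    abel
  rw [hr]
  set qc : 𝒜 := c - c * (c * cd) with hqc_def
  set qa : 𝒜 := a * (1 - p) with hqa_def
  set U : 𝒜 := ∑' n : ℕ, a ^ (n + 1) * (1 - p) * b * cd ^ (n + 1) with hU_def
  set u : 𝒜 := (1 - p) * b - (1 - p) * (b * (c * cd)) - U with hu_def
  -- quasinilpotency of the diagonal pieces
  have hqc_q : IsQuasinilpotent qc := by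
    rw [hqc_def, ← mul_assoc, ← pow_two]
    exact hc3
  have hqa_q : IsQuasinilpotent qa := hqa3
  -- structural relations
  have hqcp : qc * p = qc := by
    rw [hqc_def, sub_mul, hcp, mul_assoc, mul_assoc, hcdp]
  have hpqc : p * qc = qc := by
    rw [hqc_def, mul_sub, hpc, hpc']
  have hqap : qa * p = 0 := by
    rw [hqa_def, mul_assoc, sub_mul, one_mul, hpp, sub_self, mul_zero]
  have hpqa : p * qa = 0 := by
    rw [hqa_def, ← mul_assoc, ← hap, mul_assoc, mul_sub, mul_one, hpp, sub_self, mul_zero]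
  have hpu : p * u = 0 := by
    rw [hu_def, mul_sub, mul_sub, hppi', hppi', hpU, sub_zero, sub_zero]
  have hup : u * p = u := by
    rw [hu_def, sub_mul, sub_mul, mul_assoc, hbp,
      mul_assoc ((1:𝒜) - p) (b * (c * cd)) p, mul_assoc b (c * cd) p, mul_assoc c cd p, hcdp,
      hUp]
  have huu : u * u = 0 := by
    calc u * u = (u * p) * u := by rw [hup]
      _ = 0 := by rw [mul_assoc u p u, hpu, mul_zero]
  have hqcu : qc * u = 0 := by
    calc qc * u = (qc * p) * u := by rw [hqcp]
      _ = 0 := by rw [mul_assoc qc p u, hpu, mul_zero]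
  have huqa : u * qa = 0 := by
    calc u * qa = (u * p) * qa := by rw [hup]
      _ = 0 := by rw [mul_assoc u p qa, hpqa, mul_zero]
  have hqcqa : qc * qa = 0 := by
    calc qc * qa = (qc * p) * qa := by rw [hqcp]
      _ = 0 := by rw [mul_assoc qc p qa, hpqa, mul_zero]
  have hqaqc : qa * qc = 0 := by
    calc qa * qc = qa * (p * qc) := by rw [hpqc]
      _ = 0 := by rw [← mul_assoc qa p qc, hqap, zero_mul]
  -- spectrum argument
  apply qnil_of_spec
  intro lam hlam
  set lam' : 𝒜 := algebraMap ℂ 𝒜 lam with hlam'_def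
  set μ : 𝒜 := algebraMap ℂ 𝒜 lam⁻¹ with hμ_def
  have hμlam : μ * lam' = 1 := by
    rw [hμ_def, hlam'_def, ← map_mul, inv_mul_cancel₀ hlam, map_one]
  have hlamμ : lam' * μ = 1 := by
    rw [hμ_def, hlam'_def, ← map_mul, mul_inv_cancel₀ hlam, map_one]
  have hcent : ∀ x : 𝒜, lam' * x = x * lam' := fun x => Algebra.commutes lam x
  have hcentμ : ∀ x : 𝒜, μ * x = x * μ := fun x => Algebra.commutes lam⁻¹ x
  obtain ⟨vA, hvA⟩ := qnil_isUnit hqc_q hlam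
  obtain ⟨vB, hvB⟩ := qnil_isUnit hqa_q hlam
  set A : 𝒜 := ((vA⁻¹ : 𝒜ˣ) : 𝒜) with hA_def
  set B : 𝒜 := ((vB⁻¹ : 𝒜ˣ) : 𝒜) with hB_def
  have hA1 : (lam' - qc) * A = 1 := by rw [hA_def, ← hvA]; exact vA.mul_inv
  have hA2 : A * (lam' - qc) = 1 := by rw [hA_def, ← hvA]; exact vA.inv_mul
  have hB1 : (lam' - qa) * B = 1 := by rw [hB_def, ← hvB]; exact vB.mul_inv
  have hB2 : B * (lam' - qa) = 1 := by rw [hB_def, ← hvB]; exact vB.inv_mul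
  -- commutation-style identities
  have hqaA : qa * A = μ * qa := by
    have h1 : qa * (lam' - qc) = lam' * qa := by
      rw [mul_sub, hqaqc, sub_zero, ← hcent]
    calc qa * A = μ * (lam' * (qa * A)) := by rw [← mul_assoc μ lam' (qa * A), hμlam, one_mul]
      _ = μ * ((qa * (lam' - qc)) * A) := by rw [h1, mul_assoc lam' qa A]
      _ = μ * (qa * ((lam' - qc) * A)) := by rw [mul_assoc qa (lam' - qc) A]
      _ = μ * qa := by rw [hA1, mul_one]
  have hAqa : A * qa = μ * qa := by
    have h2 : (lam' - qc) * qa = lam' * qa := by rw [sub_mul, hqcqa, sub_zero]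
    calc A * qa = μ * (lam' * (A * qa)) := by rw [← mul_assoc μ lam' (A * qa), hμlam, one_mul]
      _ = μ * ((A * lam') * qa) := by rw [← mul_assoc lam' A qa, hcent A]
      _ = μ * (A * ((lam' - qc) * qa)) := by rw [h2, mul_assoc A lam' qa]
      _ = μ * ((A * (lam' - qc)) * qa) := by rw [← mul_assoc A (lam' - qc) qa]
      _ = μ * qa := by rw [hA2, one_mul]
  have hqcB : qc * B = μ * qc := by
    have h1 : qc * (lam' - qa) = lam' * qc := by
      rw [mul_sub, hqcqa, sub_zero, ← hcent]
    calc qc * B = μ * (lam' * (qc * B)) := by rw [← mul_assoc μ lam' (qc * B), hμlam, one_mul]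
      _ = μ * ((qc * (lam' - qa)) * B) := by rw [h1, mul_assoc lam' qc B]
      _ = μ * (qc * ((lam' - qa) * B)) := by rw [mul_assoc qc (lam' - qa) B]
      _ = μ * qc := by rw [hB1, mul_one]
  have hBqc : B * qc = μ * qc := by
    have h2 : (lam' - qa) * qc = lam' * qc := by rw [sub_mul, hqaqc, sub_zero]
    calc B * qc = μ * (lam' * (B * qc)) := by rw [← mul_assoc μ lam' (B * qc), hμlam, one_mul]
      _ = μ * ((B * lam') * qc) := by rw [← mul_assoc lam' B qc, hcent B]
      _ = μ * (B * ((lam' - qa) * qc)) := by rw [h2, mul_assoc B lam' qc]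
      _ = μ * ((B * (lam' - qa)) * qc) := by rw [← mul_assoc B (lam' - qa) qc]
      _ = μ * qc := by rw [hB2, one_mul]
  have hqcA : qc * A = lam' * A - 1 := by
    have e : lam' * A - qc * A = 1 := by rw [← sub_mul]; exact hA1
    rw [← e]; abel
  have hAqc : A * qc = lam' * A - 1 := by
    have e : A * lam' - A * qc = 1 := by rw [← mul_sub]; exact hA2
    rw [← hcent A] at e
    rw [← e]; abel
  have hqaB : qa * B = lam' * B - 1 := by
    have e : lam' * B - qa * B = 1 := by rw [← sub_mul]; exact hB1
    rw [← e]; abel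
  have hBqa : B * qa = lam' * B - 1 := by
    have e : B * lam' - B * qa = 1 := by rw [← mul_sub]; exact hB2
    rw [← hcent B] at e
    rw [← e]; abel
  -- the inverse of lam' - (qc + qa) and its interaction with u
  have hDv : (lam' - qc - qa) * (A + B - μ) = 1 := by
    have expand : (lam' - qc - qa) * (A + B - μ)
        = lam' * A + lam' * B - lam' * μ - qc * A - qc * B + qc * μ
          - qa * A - qa * B + qa * μ := by noncomm_ring
    rw [expand, hqcA, hqcB, hqaA, hqaB, hlamμ, ← hcentμ qc, ← hcentμ qa]
    abel
  have hvD : (A + B - μ) * (lam' - qc - qa) = 1 := by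
    have expand : (A + B - μ) * (lam' - qc - qa)
        = A * lam' + B * lam' - μ * lam' - A * qc - B * qc + μ * qc
          - A * qa - B * qa + μ * qa := by noncomm_ring
    rw [expand, hAqc, hBqc, hAqa, hBqa, hμlam, ← hcent A, ← hcent B]
    abel
  have hμu : u * (μ * u) = 0 := by
    rw [hcentμ u, ← mul_assoc u u μ, huu, zero_mul]
  have hAu : u * (A * u) = 0 := by
    have e : lam' * A = 1 + A * qc := by
      have e0 : A * lam' - A * qc = 1 := by rw [← mul_sub]; exact hA2
      rw [← hcent A] at e0
      rw [← e0]; abel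
    have hAeq : A = μ + μ * (A * qc) := by
      calc A = μ * (lam' * A) := by rw [← mul_assoc, hμlam, one_mul]
        _ = μ * (1 + A * qc) := by rw [e]
        _ = μ + μ * (A * qc) := by rw [mul_add, mul_one]
    rw [hAeq, add_mul μ (μ * (A * qc)) u, mul_add u (μ * u) ((μ * (A * qc)) * u), hμu,
      zero_add, mul_assoc μ (A * qc) u, mul_assoc A qc u, hqcu, mul_zero, mul_zero, mul_zero]
  have hBu : u * (B * u) = 0 := by
    have e : lam' * B = 1 + qa * B := by
      have e0 : lam' * B - qa * B = 1 := by rw [← sub_mul]; exact hB1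
      rw [← e0]; abel
    have hBeq : B = μ + μ * (qa * B) := by
      calc B = μ * (lam' * B) := by rw [← mul_assoc, hμlam, one_mul]
        _ = μ * (1 + qa * B) := by rw [e]
        _ = μ + μ * (qa * B) := by rw [mul_add, mul_one]
    rw [hBeq, add_mul μ (μ * (qa * B)) u, mul_add u (μ * u) ((μ * (qa * B)) * u), hμu,
      zero_add, mul_assoc μ (qa * B) u, mul_assoc qa B u, hcentμ (qa * (B * u)),
      ← mul_assoc u (qa * (B * u)) μ, ← mul_assoc u qa (B * u), huqa, zero_mul, zero_mul]
  have huvu : u * ((A + B - μ) * u) = 0 := by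
    rw [sub_mul (A + B) μ u, mul_sub u ((A + B) * u) (μ * u), add_mul A B u,
      mul_add u (A * u) (B * u), hAu, hBu, hμu, add_zero, sub_zero]
  -- assemble the inverse of lam' - (qc + qa + u)
  set v : 𝒜 := A + B - μ with hv_def
  set X : 𝒜 := (1 + v * u) * v with hX_def
  have hD : lam' - (qc + qa + u) = (lam' - qc - qa) - u := by abel
  have hright : ((lam' - qc - qa) - u) * X = 1 := by
    have e1 : X = v + (v * u) * v := by rw [hX_def, add_mul 1 (v * u) v, one_mul]
    rw [e1, sub_mul (lam' - qc - qa) u (v + (v * u) * v),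
      mul_add (lam' - qc - qa) v ((v * u) * v), mul_add u v ((v * u) * v),
      ← mul_assoc (lam' - qc - qa) (v * u) v, ← mul_assoc (lam' - qc - qa) v u, hDv, one_mul,
      ← mul_assoc u (v * u) v, huvu, zero_mul, add_zero]
    abel
  have hleft : X * ((lam' - qc - qa) - u) = 1 := by
    rw [hX_def, mul_assoc (1 + v * u) v (lam' - qc - qa - u),
      mul_sub v (lam' - qc - qa) u, hvD,
      mul_sub (1 + v * u) 1 (v * u), mul_one, add_mul 1 (v * u) (v * u), one_mul,
      mul_assoc v u (v * u), huvu, mul_zero, add_zero]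
    abel
  rw [hD]
  exact ⟨⟨lam' - qc - qa - u, X, hright, hleft⟩, rfl⟩
end
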